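/- arXiv:math/0109102 — 6 statements merged into one kernel-verified Lean document; each statement's English description precedes it below -/
import Mathlib

section
/- For a surjection f : ω → ω and partitions X, Y of ω, the preimage of the meet is the meet of the preimages: f⁻¹(X ⊓ Y) = f⁻¹(X) ⊓ f⁻¹(Y). -/
open Set

/-- `X` is a partition of ω: pairwise disjoint non-empty subsets covering ℕ. -/
def IsPartition (X : Set (Set ℕ)) : Prop :=
  (∀ b ∈ X, b.Nonempty) ∧ (∀ b ∈ X, ∀ c ∈ X, b ≠ c → Disjoint b c) ∧ ⋃₀ X = Set.univ

/-- `X ⊑ Y` : `X` is coarser than `Y`, i.e. each block of `X` is a union of blocks of `Y`. -/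
def Coarser (X Y : Set (Set ℕ)) : Prop :=
  ∀ b ∈ X, ∃ S ⊆ Y, b = ⋃₀ S

/-- `n` and `m` lie in the same block of `X`. -/
def SameBlock (X : Set (Set ℕ)) (n m : ℕ) : Prop := ∃ b ∈ X, n ∈ b ∧ m ∈ b

/-- The meet `X ⊓ Y` : the finest partition coarser than both `X` and `Y`,
given by the classes of the equivalence relation generated by the two block relations. -/
def pMeet (X Y : Set (Set ℕ)) : Set (Set ℕ) :=
  {b | ∃ n, b = {m | Relation.EqvGen (fun a c => SameBlock X a c ∨ SameBlock Y a c) n m}}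

/-- The one-block partition `{ω}`. -/
def OneBlock : Set (Set ℕ) := {Set.univ}

/-- A partition-filter: a set of partitions of ω not containing `{ω}`,
closed under meets and upward closed under the coarsening relation. -/
def IsPartitionFilter (F : Set (Set (Set ℕ))) : Prop :=
  (∀ X ∈ F, IsPartition X) ∧ OneBlock ∉ F ∧
  (∀ X ∈ F, ∀ Y ∈ F, pMeet X Y ∈ F) ∧
  (∀ X ∈ F, ∀ Y, IsPartition Y → Coarser X Y → Y ∈ F)

/-- A partition-ultrafilter: a maximal partition-filter. -/
def IsPartitionUltrafilter (U : Set (Set (Set ℕ))) : Prop :=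
  IsPartitionFilter U ∧ ∀ F, IsPartitionFilter F → U ⊆ F → U = F

/-- `f(X)` : the finest partition such that `n, m` in a common block of `X`
implies `f n, f m` in a common block of `f(X)`. -/
def imagePart (f : ℕ → ℕ) (X : Set (Set ℕ)) : Set (Set ℕ) :=
  {c | ∃ k, c = {l | Relation.EqvGen
      (fun a b => ∃ n m, SameBlock X n m ∧ f n = a ∧ f m = b) k l}}

/-- `f⁻¹(X) = {f⁻¹(b) : b ∈ X}`. -/
def preimagePart (f : ℕ → ℕ) (X : Set (Set ℕ)) : Set (Set ℕ) :=
  {c | ∃ b ∈ X, c = f ⁻¹' b}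

/-- `f⁻¹(F) = {f⁻¹(X) : X ∈ F}`. -/
def preimageFam (f : ℕ → ℕ) (F : Set (Set (Set ℕ))) : Set (Set (Set ℕ)) :=
  {Y | ∃ X ∈ F, Y = preimagePart f X}

/-- `f(F) = {Y : ∃ X ∈ F, f(X) ⊑ Y}` (among partitions). -/
def imageFilter (f : ℕ → ℕ) (F : Set (Set (Set ℕ))) : Set (Set (Set ℕ)) :=
  {Y | IsPartition Y ∧ ∃ X ∈ F, Coarser (imagePart f X) Y}

/-- A segment: a partition of `{0, …, n-1}`. -/
def IsSegOf (s : Set (Set ℕ)) (n : ℕ) : Prop :=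
  (∀ b ∈ s, b.Nonempty) ∧ (∀ b ∈ s, ∀ c ∈ s, b ≠ c → Disjoint b c) ∧ ⋃₀ s = {k | k < n}

/-- `s*` : the segment `s` (of domain `n`) together with the new block `{n}`. -/
def segExt (s : Set (Set ℕ)) (n : ℕ) : Set (Set ℕ) := insert {n} s

/-- `s ⊴ X` : each block of `s` (a segment of domain `n`) is the trace of a block of `X`. -/
def InitSeg (s : Set (Set ℕ)) (n : ℕ) (X : Set (Set ℕ)) : Prop :=
  ∀ b ∈ s, ∃ d ∈ X, b = d ∩ {k | k < n}

/-- `s ⊑ X` for a segment `s` of domain `n`: each block of `s` is a union of traces of blocks of `X`. -/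
def SegCoarser (s : Set (Set ℕ)) (n : ℕ) (X : Set (Set ℕ)) : Prop :=
  ∀ b ∈ s, ∃ S ⊆ X, b = (⋃₀ S) ∩ {k | k < n}

/-- The segment-coloring-property of a family `C` of (infinite) partitions. -/
def SegColProp (C : Set (Set (Set ℕ))) : Prop :=
  ∀ (k r : ℕ) (π : Set (Set ℕ) → ℕ → Fin (r + 1)), ∀ Z ∈ C,
    ∃ X ∈ C, Coarser X Z ∧
      ∀ (n : ℕ) (s : Set (Set ℕ)) (ns : ℕ),
        IsSegOf s ns → s.ncard = n + 1 → InitSeg s ns X →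
        ∃ c : Fin (r + 1),
          ∀ (u : Set (Set ℕ)) (nu : ℕ),
            IsSegOf u nu → u.ncard = n + k + 1 →
            InitSeg s ns u → SegCoarser (segExt u nu) (nu + 1) X →
            π u nu = c

/-- A Ramseyan ultrafilter: a partition-ultrafilter consisting of infinite partitions
which has the segment-coloring-property. -/
def RamseyanUltrafilter (U : Set (Set (Set ℕ))) : Prop :=
  IsPartitionUltrafilter U ∧ (∀ X ∈ U, X.Infinite) ∧ SegColProp U

/-- `X ⊓ {n}` : glue together all blocks of `X` meeting `{0, …, n-1}` into one block. -/
def glue (X : Set (Set ℕ)) (n : ℕ) : Set (Set ℕ) :=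
  insert (⋃₀ {d ∈ X | ∃ k < n, k ∈ d}) {d ∈ X | ∀ k < n, k ∉ d}

/-- `X ⊑* Y` iff `(X ⊓ {n}) ⊑ Y` for some `n`. -/
def CoarserStar (X Y : Set (Set ℕ)) : Prop := ∃ n, Coarser (glue X n) Y

/-- Meet of a nonempty list of partitions. -/
def listMeet : List (Set (Set ℕ)) → Set (Set ℕ)
  | [] => OneBlock
  | [X] => X
  | X :: Y :: L => pMeet X (listMeet (Y :: L))

/-- The partition-filter generated by a family `B` of partitions:
all partitions `X` such that some finite meet of members of `B` is `⊑*`-below `X`. -/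
def genFilter (B : Set (Set (Set ℕ))) : Set (Set (Set ℕ)) :=
  {X | IsPartition X ∧
    ∃ L : List (Set (Set ℕ)), L ≠ [] ∧ (∀ Y ∈ L, Y ∈ B) ∧ CoarserStar (listMeet L) X}

/-- `X` diagonalizes the family `{X_s : s a segment}` (given as `Xs s n` for `s` of domain `n`). -/
def Diagonalizes (X : Set (Set ℕ)) (Xs : Set (Set ℕ) → ℕ → Set (Set ℕ)) : Prop :=
  Coarser X (Xs ∅ 0) ∧
  ∀ s n, IsSegOf s n → InitSeg (segExt s n) (n + 1) X →
    Coarser (glue X n) (Xs s n)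

/-- The family `A` is relatively happy. -/
def RelativelyHappy (A : Set (Set (Set ℕ))) : Prop :=
  ∀ Xs : Set (Set ℕ) → ℕ → Set (Set ℕ),
    (∀ s n, IsSegOf s n → Xs s n ∈ A) →
    genFilter {X | ∃ s n, IsSegOf s n ∧ X = Xs s n} ⊆ A →
    ∃ X ∈ A, Diagonalizes X Xs

/-- the preimage of the meet is the meet of the preimages. -/
theorem stmt1 (f : ℕ → ℕ) (hf : Function.Surjective f) (X Y : Set (Set ℕ))
    (hX : IsPartition X) (hY : IsPartition Y) :
    preimagePart f (pMeet X Y) = pMeet (preimagePart f X) (preimagePart f Y) := by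
  set R : ℕ → ℕ → Prop := fun a c => SameBlock X a c ∨ SameBlock Y a c with hR
  set R' : ℕ → ℕ → Prop := fun a c =>
    SameBlock (preimagePart f X) a c ∨ SameBlock (preimagePart f Y) a c with hR'
  have same : ∀ Z : Set (Set ℕ), ∀ a c,
      SameBlock (preimagePart f Z) a c ↔ SameBlock Z (f a) (f c) := by
    intro Z a c
    constructor
    · rintro ⟨b, ⟨b0, hb0, rfl⟩, ha, hc⟩
      exact ⟨b0, hb0, ha, hc⟩
    · rintro ⟨b, hb, ha, hc⟩
      exact ⟨f ⁻¹' b, ⟨b, hb, rfl⟩, ha, hc⟩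
  have reflR' : ∀ n m, f n = f m → Relation.EqvGen R' n m := by
    intro n m hnm
    obtain ⟨b, hb, hfb⟩ : ∃ b ∈ X, f n ∈ b := by
      have := hX.2.2
      have : f n ∈ ⋃₀ X := by rw [this]; trivial
      simpa using this
    apply Relation.EqvGen.rel
    left
    rw [same]
    exact ⟨b, hb, hfb, hnm ▸ hfb⟩
  have fwd : ∀ n m, Relation.EqvGen R' n m → Relation.EqvGen R (f n) (f m) := by
    intro n m h
    induction h with
    | rel a c h =>
      apply Relation.EqvGen.rel
      rcases h with h | h
      · exact Or.inl ((same X a c).1 h)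
      · exact Or.inr ((same Y a c).1 h)
    | refl a => exact Relation.EqvGen.refl _
    | symm a c _ ih => exact Relation.EqvGen.symm _ _ ih
    | trans a c d _ _ ih1 ih2 => exact Relation.EqvGen.trans _ _ _ ih1 ih2
  have bwd : ∀ a b, Relation.EqvGen R a b →
      ∀ n m, f n = a → f m = b → Relation.EqvGen R' n m := by
    intro a b h
    induction h with
    | rel a c h =>
      intro n m hn hm
      apply Relation.EqvGen.rel
      rcases h with h | h
      · exact Or.inl ((same X n m).2 (hn ▸ hm ▸ h))
      · exact Or.inr ((same Y n m).2 (hn ▸ hm ▸ h))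
    | refl a => intro n m hn hm; exact reflR' n m (hn.trans hm.symm)
    | symm a c _ ih =>
      intro n m hn hm
      exact Relation.EqvGen.symm _ _ (ih m n hm hn)
    | trans a c d _ _ ih1 ih2 =>
      intro n m hn hm
      obtain ⟨k, hk⟩ := hf c
      exact Relation.EqvGen.trans _ _ _ (ih1 n k hn hk) (ih2 k m hk hm)
  have classEq : ∀ n : ℕ,
      {m | Relation.EqvGen R' n m} = f ⁻¹' {l | Relation.EqvGen R (f n) l} := by
    intro n
    ext m
    simp only [Set.mem_setOf_eq, Set.mem_preimage]
    constructor
    · exact fwd n m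
    · intro h; exact bwd (f n) (f m) h n m rfl rfl
  ext c
  constructor
  · rintro ⟨b, ⟨k, rfl⟩, rfl⟩
    obtain ⟨n, rfl⟩ := hf k
    exact ⟨n, (classEq n).symm ▸ rfl⟩
  · rintro ⟨n, rfl⟩
    exact ⟨{l | Relation.EqvGen R (f n) l}, ⟨f n, rfl⟩, classEq n⟩
end

section
/- Let U and V be partition-ultrafilters such that there exist surjections f, g : ω → ω with V = f(U) and U = g(V), and suppose U contains a partition all of whose blocks are infinite. Then there is a permutation h of ω with h(U) = V. -/
open Set

/-- Blockwise action of a map on a partition: `h(X) = {h(b) : b ∈ X}`. -/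
def blockImage (h : ℕ → ℕ) (X : Set (Set ℕ)) : Set (Set ℕ) := {c | ∃ b ∈ X, c = h '' b}

/-- Blockwise action of a map on a family of partitions. -/
def famImage (h : ℕ → ℕ) (U : Set (Set (Set ℕ))) : Set (Set (Set ℕ)) :=
  {Y | ∃ X ∈ U, Y = blockImage h X}


open Set

/-! Pulling back the partition with infinite blocks along `g` gives `Y ∈ V` with infinite
blocks. Since `f` is surjective, every `f⁻¹(c)`, `c ∈ Y`, is infinite, so there is a permutation
`e` sending each such fibre onto `c`; that is, `e n` and `f n` always lie in the same block of `Y`.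
Then `e(X)` refines `f(X) ⊓ Y` for every `X ∈ U`, whence `e(U) ⊆ V`. Conversely, a
partition-ultrafilter contains every partition whose meet with each of its members is not `{ω}`;
this gives `e⁻¹(Y) ∈ U` for every `Y ∈ V`, i.e. `V ⊆ e(U)`. -/

open Relation

lemma eqvGen_map_of_rel {α β : Type*} {r : α → α → Prop} {s : β → β → Prop} (f : α → β)
    (h : ∀ a b, r a b → s (f a) (f b)) {a b : α} (hab : EqvGen r a b) :
    EqvGen s (f a) (f b) := by
  induction hab with
  | rel x y hxy => exact .rel _ _ (h x y hxy)
  | refl x => exact .refl _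
  | symm x y _ ih => exact .symm _ _ ih
  | trans x y z _ _ ih₁ ih₂ => exact .trans _ _ _ ih₁ ih₂

lemma sameBlock_oneBlock (n m : ℕ) : SameBlock OneBlock n m :=
  ⟨univ, rfl, trivial, trivial⟩

namespace IsPartition

variable {X Y : Set (Set ℕ)}

lemma exists_mem (hX : IsPartition X) (n : ℕ) : ∃ b ∈ X, n ∈ b :=
  mem_sUnion.1 (hX.2.2 ▸ mem_univ n)

lemma eq_of_mem (hX : IsPartition X) {b c : Set ℕ} (hb : b ∈ X) (hc : c ∈ X) {n : ℕ}
    (hnb : n ∈ b) (hnc : n ∈ c) : b = c :=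
  by_contra fun hne => disjoint_left.mp (hX.2.1 b hb c hc hne) hnb hnc

lemma sameBlock_equivalence (hX : IsPartition X) : Equivalence (SameBlock X) where
  refl n := let ⟨b, hb, hn⟩ := hX.exists_mem n; ⟨b, hb, hn, hn⟩
  symm := fun ⟨b, hb, hn, hm⟩ => ⟨b, hb, hm, hn⟩
  trans := fun ⟨_, hb, hn, hm⟩ ⟨c, hc, hm', hp⟩ => ⟨c, hc, hX.eq_of_mem hb hc hm hm' ▸ hn, hp⟩

lemma coarser_iff (hX : IsPartition X) (hY : IsPartition Y) :
    Coarser X Y ↔ SameBlock Y ≤ SameBlock X := by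
  constructor
  · rintro hco n m ⟨c, hc, hnc, hmc⟩
    obtain ⟨b, hb, hnb⟩ := hX.exists_mem n
    obtain ⟨S, hSY, rfl⟩ := hco b hb
    obtain ⟨c', hc'S, hnc'⟩ := hnb
    rw [← hY.eq_of_mem hc (hSY hc'S) hnc hnc'] at hc'S
    exact ⟨⋃₀ S, hb, ⟨c, hc'S, hnc⟩, ⟨c, hc'S, hmc⟩⟩
  · intro hle b hb
    refine ⟨{c ∈ Y | c ⊆ b}, fun c hc => hc.1, Subset.antisymm (fun n hn => ?_) ?_⟩
    · obtain ⟨c, hc, hnc⟩ := hY.exists_mem n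
      refine ⟨c, ⟨hc, fun m hm => ?_⟩, hnc⟩
      obtain ⟨b', hb', hnb', hmb'⟩ := hle n m ⟨c, hc, hnc, hm⟩
      exact hX.eq_of_mem hb' hb hnb' hn ▸ hmb'
    · exact sUnion_subset fun c hc => hc.2

lemma eq_oneBlock (hX : IsPartition X) (h : ∀ n m, SameBlock X n m) : X = OneBlock := by
  obtain ⟨b, hb, h0b⟩ := hX.exists_mem 0
  have hbu : b = univ := eq_univ_of_forall fun m =>
    let ⟨c, hc, h0c, hmc⟩ := h 0 m
    hX.eq_of_mem hc hb h0c h0b ▸ hmc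
  refine eq_singleton_iff_unique_mem.2 ⟨hbu ▸ hb, fun c hc => ?_⟩
  obtain ⟨n, hn⟩ := hX.1 c hc
  exact hX.eq_of_mem hc hb hn (hbu ▸ mem_univ n) |>.trans hbu

end IsPartition

def classesOf (E : ℕ → ℕ → Prop) : Set (Set ℕ) := {b | ∃ n, b = {m | E n m}}

section classesOf

variable {E : ℕ → ℕ → Prop}

lemma isPartition_classesOf (hE : Equivalence E) : IsPartition (classesOf E) := by
  refine ⟨?_, ?_, eq_univ_of_forall fun n => ⟨_, ⟨n, rfl⟩, hE.refl n⟩⟩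
  · rintro b ⟨n, rfl⟩
    exact ⟨n, hE.refl n⟩
  · rintro b ⟨n, rfl⟩ c ⟨m, rfl⟩ hne
    refine disjoint_left.2 fun k hnk hmk => hne (ext fun l => ?_)
    exact ⟨hE.trans (hE.trans hmk (hE.symm hnk)), hE.trans (hE.trans hnk (hE.symm hmk))⟩

lemma sameBlock_classesOf (hE : Equivalence E) {n m : ℕ} :
    SameBlock (classesOf E) n m ↔ E n m := by
  constructor
  · rintro ⟨_, ⟨k, rfl⟩, hkn, hkm⟩
    exact hE.trans (hE.symm hkn) hkm
  · exact fun h => ⟨_, ⟨n, rfl⟩, hE.refl n, h⟩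

end classesOf

section pMeet

variable {A B : Set (Set ℕ)}

lemma isPartition_pMeet (A B : Set (Set ℕ)) : IsPartition (pMeet A B) :=
  isPartition_classesOf (EqvGen.is_equivalence _)

lemma sameBlock_pMeet {n m : ℕ} :
    SameBlock (pMeet A B) n m ↔ EqvGen (fun a c => SameBlock A a c ∨ SameBlock B a c) n m :=
  sameBlock_classesOf (EqvGen.is_equivalence _)

lemma le_sameBlock_pMeet_left : SameBlock A ≤ SameBlock (pMeet A B) :=
  fun n m h => sameBlock_pMeet.2 (.rel n m (.inl h))

lemma le_sameBlock_pMeet_right : SameBlock B ≤ SameBlock (pMeet A B) :=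
  fun n m h => sameBlock_pMeet.2 (.rel n m (.inr h))

lemma sameBlock_pMeet_le {r : ℕ → ℕ → Prop} (hr : Equivalence r) (hA : SameBlock A ≤ r)
    (hB : SameBlock B ≤ r) : SameBlock (pMeet A B) ≤ r :=
  fun n m h => hr.eqvGen_iff.1 <|
    EqvGen.mono (fun a c hac => hac.elim (hA a c) (hB a c)) n m (sameBlock_pMeet.1 h)

end pMeet

section images

variable {f : ℕ → ℕ} {X Y : Set (Set ℕ)}

lemma isPartition_imagePart (f : ℕ → ℕ) (X : Set (Set ℕ)) : IsPartition (imagePart f X) :=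
  isPartition_classesOf (EqvGen.is_equivalence _)

lemma SameBlock.imagePart {n m : ℕ} (h : SameBlock X n m) :
    SameBlock (imagePart f X) (f n) (f m) :=
  (sameBlock_classesOf (EqvGen.is_equivalence _)).2 (.rel _ _ ⟨n, m, h, rfl, rfl⟩)

lemma imagePart_mem_imageFilter {U : Set (Set (Set ℕ))} (hXU : X ∈ U) :
    imagePart f X ∈ imageFilter f U :=
  have hP := isPartition_imagePart f X
  ⟨hP, X, hXU, (hP.coarser_iff hP).2 le_rfl⟩

lemma isPartition_preimagePart (hf : Function.Surjective f) (hY : IsPartition Y) :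
    IsPartition (preimagePart f Y) := by
  refine ⟨?_, ?_, eq_univ_of_forall fun n => ?_⟩
  · rintro b ⟨c, hc, rfl⟩
    obtain ⟨p, hp⟩ := hY.1 c hc
    obtain ⟨n, rfl⟩ := hf p
    exact ⟨n, hp⟩
  · rintro b ⟨c, hc, rfl⟩ b' ⟨c', hc', rfl⟩ hne
    exact (hY.2.1 c hc c' hc' fun h => hne (h ▸ rfl)).preimage f
  · obtain ⟨c, hc, hfn⟩ := hY.exists_mem (f n)
    exact ⟨f ⁻¹' c, ⟨c, hc, rfl⟩, hfn⟩

lemma sameBlock_preimagePart {n m : ℕ} :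
    SameBlock (preimagePart f Y) n m ↔ SameBlock Y (f n) (f m) := by
  constructor
  · rintro ⟨_, ⟨c, hc, rfl⟩, hn, hm⟩
    exact ⟨c, hc, hn, hm⟩
  · exact fun ⟨c, hc, hn, hm⟩ => ⟨f ⁻¹' c, ⟨c, hc, rfl⟩, hn, hm⟩

lemma infinite_of_mem_preimagePart (hf : Function.Surjective f) (hY : ∀ c ∈ Y, c.Infinite)
    {b : Set ℕ} (hb : b ∈ preimagePart f Y) : b.Infinite := by
  obtain ⟨c, hc, rfl⟩ := hb
  exact (hY c hc).preimage (hf.range_eq ▸ subset_univ c)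

lemma blockImage_eq_preimagePart (e : ℕ ≃ ℕ) (X : Set (Set ℕ)) :
    blockImage e X = preimagePart e.symm X := by
  simp only [blockImage, preimagePart, Equiv.image_eq_preimage_symm]

lemma isPartition_blockImage (e : ℕ ≃ ℕ) (hX : IsPartition X) : IsPartition (blockImage e X) :=
  blockImage_eq_preimagePart e X ▸ isPartition_preimagePart e.symm.surjective hX

lemma sameBlock_blockImage (e : ℕ ≃ ℕ) {n m : ℕ} :
    SameBlock (blockImage e X) (e n) (e m) ↔ SameBlock X n m := by
  rw [blockImage_eq_preimagePart, sameBlock_preimagePart, e.symm_apply_apply, e.symm_apply_apply]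

lemma blockImage_preimagePart (hf : Function.Surjective f) (Y : Set (Set ℕ)) :
    blockImage f (preimagePart f Y) = Y := by
  ext c
  constructor
  · rintro ⟨_, ⟨d, hd, rfl⟩, rfl⟩
    rwa [image_preimage_eq d hf]
  · exact fun hc => ⟨_, ⟨c, hc, rfl⟩, (image_preimage_eq c hf).symm⟩

end images

variable {U V : Set (Set (Set ℕ))}

lemma IsPartitionUltrafilter.mem_of_forall_pMeet_ne_oneBlock (hU : IsPartitionUltrafilter U)
    (hne : U.Nonempty) {Z : Set (Set ℕ)} (hZ : IsPartition Z)
    (hcompat : ∀ X ∈ U, pMeet X Z ≠ OneBlock) : Z ∈ U := by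
  set G := {P | IsPartition P ∧ ∃ X ∈ U, SameBlock P ≤ SameBlock (pMeet X Z)}
  have hG : IsPartitionFilter G := by
    refine ⟨fun P hP => hP.1, ?_, ?_, ?_⟩
    · rintro ⟨-, X, hX, hle⟩
      exact hcompat X hX <|
        (isPartition_pMeet X Z).eq_oneBlock fun n m => hle n m (sameBlock_oneBlock n m)
    · rintro P₁ ⟨-, X₁, hX₁, hle₁⟩ P₂ ⟨-, X₂, hX₂, hle₂⟩
      refine ⟨isPartition_pMeet _ _, pMeet X₁ X₂, hU.1.2.2.1 X₁ hX₁ X₂ hX₂, ?_⟩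
      have hR := (isPartition_pMeet (pMeet X₁ X₂) Z).sameBlock_equivalence
      have h₁ : SameBlock (pMeet X₁ Z) ≤ SameBlock (pMeet (pMeet X₁ X₂) Z) :=
        sameBlock_pMeet_le hR (le_sameBlock_pMeet_left.trans le_sameBlock_pMeet_left)
          le_sameBlock_pMeet_right
      have h₂ : SameBlock (pMeet X₂ Z) ≤ SameBlock (pMeet (pMeet X₁ X₂) Z) :=
        sameBlock_pMeet_le hR (le_sameBlock_pMeet_right.trans le_sameBlock_pMeet_left)
          le_sameBlock_pMeet_right
      exact sameBlock_pMeet_le hR (hle₁.trans h₁) (hle₂.trans h₂)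
    · rintro P ⟨hP, X, hX, hle⟩ Q hQ hPQ
      exact ⟨hQ, X, hX, ((hP.coarser_iff hQ).1 hPQ).trans hle⟩
  have hUG : U ⊆ G := fun X hX => ⟨hU.1.1 X hX, X, hX, le_sameBlock_pMeet_left⟩
  obtain ⟨X, hX⟩ := hne
  rw [hU.2 G hG hUG]
  exact ⟨hZ, X, hX, le_sameBlock_pMeet_right⟩

/-- A meet `X ⊓ f⁻¹(Y) = {ω}` would push forward along `f` to `X' ⊓ Y = {ω}` in `V`. -/
lemma IsPartitionUltrafilter.preimagePart_mem (hU : IsPartitionUltrafilter U) (hne : U.Nonempty)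
    (hV : IsPartitionFilter V) {f : ℕ → ℕ} (hf : Function.Surjective f)
    (hUV : ∀ X ∈ U, ∃ X' ∈ V, ∀ n m, SameBlock X n m → SameBlock X' (f n) (f m))
    {Y : Set (Set ℕ)} (hY : Y ∈ V) : preimagePart f Y ∈ U := by
  refine hU.mem_of_forall_pMeet_ne_oneBlock hne (isPartition_preimagePart hf (hV.1 Y hY))
    fun X hX hone => ?_
  obtain ⟨X', hX'V, hXX'⟩ := hUV X hX
  have htotal : ∀ a b, SameBlock (pMeet X' Y) a b := by
    intro a b
    obtain ⟨n, rfl⟩ := hf a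
    obtain ⟨m, rfl⟩ := hf b
    have hnm := sameBlock_pMeet.1 (hone ▸ sameBlock_oneBlock n m)
    refine sameBlock_pMeet.2 (eqvGen_map_of_rel f (fun x y hxy => ?_) hnm)
    exact hxy.imp (hXX' x y) sameBlock_preimagePart.1
  apply hV.2.1
  rw [← (isPartition_pMeet X' Y).eq_oneBlock htotal]
  exact hV.2.2.1 X' hX'V Y hY

lemma IsPartitionUltrafilter.preimagePart_mem_of_imageFilter_eq (hU : IsPartitionUltrafilter U)
    (hne : U.Nonempty) (hV : IsPartitionFilter V) {f : ℕ → ℕ} (hf : Function.Surjective f)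
    (hfU : imageFilter f U = V) {Y : Set (Set ℕ)} (hY : Y ∈ V) : preimagePart f Y ∈ U :=
  hU.preimagePart_mem hne hV hf
    (fun X hX => ⟨imagePart f X, hfU ▸ imagePart_mem_imageFilter hX, fun _ _ => SameBlock.imagePart⟩)
    hY

lemma IsPartition.exists_equiv_sameBlock {Y : Set (Set ℕ)} (hY : IsPartition Y)
    (hinf : ∀ c ∈ Y, c.Infinite) {f : ℕ → ℕ} (hf : Function.Surjective f) :
    ∃ e : ℕ ≃ ℕ, ∀ n, SameBlock Y (e n) (f n) := by
  have hcover : ∀ n, ∃ c : Y, n ∈ (c : Set ℕ) := fun n =>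
    let ⟨c, hc, hn⟩ := hY.exists_mem n; ⟨⟨c, hc⟩, hn⟩
  choose blk hblk using hcover
  have hfib : ∀ (c : Y) n, blk n = c ↔ n ∈ (c : Set ℕ) := fun c n =>
    ⟨fun h => h ▸ hblk n, fun h => Subtype.ext (hY.eq_of_mem (blk n).2 c.2 (hblk n) h)⟩
  have hequiv : ∀ c : Y, Nonempty ({n // blk (f n) = c} ≃ {m // blk m = c}) := by
    intro c
    have hc := hinf c c.2
    have : Infinite {m // blk m = c} := by
      simp only [hfib]
      exact hc.to_subtype
    have : Infinite {n // blk (f n) = c} := by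
      simp only [hfib]
      exact (hc.preimage (hf.range_eq ▸ subset_univ _)).to_subtype
    exact nonempty_equiv_of_countable
  let e := Equiv.ofFiberEquiv fun c => (hequiv c).some
  refine ⟨e, fun n => ?_⟩
  have hen : blk (e n) = blk (f n) := Equiv.ofFiberEquiv_map _ n
  exact ⟨blk (f n), (blk (f n)).2, hen ▸ hblk (e n), hblk (f n)⟩

lemma blockImage_mem_of_sameBlock (hV : IsPartitionFilter V) {f : ℕ → ℕ}
    (hfU : imageFilter f U = V) {Y : Set (Set ℕ)} (hY : Y ∈ V) {e : ℕ ≃ ℕ}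
    (he : ∀ n, SameBlock Y (e n) (f n)) {X : Set (Set ℕ)} (hXU : X ∈ U) (hX : IsPartition X) :
    blockImage e X ∈ V := by
  have hmeet : pMeet (imagePart f X) Y ∈ V :=
    hV.2.2.1 _ (hfU ▸ imagePart_mem_imageFilter hXU) Y hY
  have heX := isPartition_blockImage e hX
  refine hV.2.2.2 _ hmeet _ heX (((isPartition_pMeet _ _).coarser_iff heX).2 ?_)
  intro a b hab
  obtain ⟨n, rfl⟩ := e.surjective a
  obtain ⟨m, rfl⟩ := e.surjective b
  have hfnm : SameBlock (imagePart f X) (f n) (f m) := ((sameBlock_blockImage e).1 hab).imagePart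
  have hR := (isPartition_pMeet (imagePart f X) Y).sameBlock_equivalence
  exact hR.trans (le_sameBlock_pMeet_right _ _ (he n))
    (hR.trans (le_sameBlock_pMeet_left _ _ hfnm) (hR.symm (le_sameBlock_pMeet_right _ _ (he m))))

/-- equivalent partition-ultrafilters, one of which contains a partition
with all blocks infinite, are isomorphic via a permutation of ω. -/
theorem stmt3 (U V : Set (Set (Set ℕ))) (f g : ℕ → ℕ)
    (hU : IsPartitionUltrafilter U) (hV : IsPartitionUltrafilter V)
    (hf : Function.Surjective f) (hg : Function.Surjective g)
    (hfU : imageFilter f U = V) (hgV : imageFilter g V = U)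
    (hX : ∃ X ∈ U, ∀ b ∈ X, b.Infinite) :
    ∃ h : ℕ → ℕ, Function.Bijective h ∧ famImage h U = V := by
  obtain ⟨X, hXU, hXinf⟩ := hX
  have hVne : V.Nonempty := ⟨imagePart f X, hfU ▸ imagePart_mem_imageFilter hXU⟩
  have hYV : preimagePart g X ∈ V := hV.preimagePart_mem_of_imageFilter_eq hVne hU.1 hg hgV hXU
  obtain ⟨e, he⟩ := (hV.1.1 _ hYV).exists_equiv_sameBlock
    (fun _ => infinite_of_mem_preimagePart hg hXinf) hf
  have heUV : ∀ X ∈ U, blockImage e X ∈ V :=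
    fun X hX => blockImage_mem_of_sameBlock hV.1 hfU hYV he hX (hU.1.1 X hX)
  refine ⟨e, e.bijective, Subset.antisymm ?_ fun Y hY => ?_⟩
  · rintro _ ⟨X, hX, rfl⟩
    exact heUV X hX
  · have hpre : preimagePart e Y ∈ U := hU.preimagePart_mem ⟨X, hXU⟩ hV.1 e.surjective
      (fun X hX => ⟨_, heUV X hX, fun _ _ => (sameBlock_blockImage e).2⟩) hY
    exact ⟨_, hpre, (blockImage_preimagePart e.surjective Y).symm⟩
end

section
/- If U is a Ramseyan ultrafilter, then the family {Min(X) \ {0} : X ∈ U} of sets of minima of blocks (excluding 0) is a Ramsey ultrafilter on ω \ {0}: for every n, r ≥ 1 and every coloring τ : [ω]ⁿ → r, there is X ∈ U such that all n-element subsets of Min(X) \ {0} get the same color. -/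
open Set

/-- `Min(X)` : the set of least elements of the blocks of `X`. -/
def minSet (X : Set (Set ℕ)) : Set ℕ := {k | ∃ b ∈ X, IsLeast b k}

section AuxStmt8

open scoped Classical

/-- The finset of least elements of blocks of `u`, within `{0,…,nu-1}`. -/
noncomputable def minFin (u : Set (Set ℕ)) (nu : ℕ) : Finset ℕ :=
  (Finset.range nu).filter (fun k => ∃ b ∈ u, IsLeast b k)

/-- The least element of the block of `X` containing `k`. -/
noncomputable def muX (X : Set (Set ℕ)) (k : ℕ) : ℕ := sInf {m | SameBlock X k m}

/-- The largest element of `insert 0 a` that is `≤ muX X k`. -/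
noncomputable def Jm (X : Set (Set ℕ)) (a : Finset ℕ) (k : ℕ) : ℕ :=
  ((insert 0 a).filter (· ≤ muX X k)).max'
    ⟨0, Finset.mem_filter.mpr ⟨Finset.mem_insert_self _ _, Nat.zero_le _⟩⟩

/-- Block of the constructed segment. -/
def Cblk (X : Set (Set ℕ)) (a : Finset ℕ) (nu j : ℕ) : Set ℕ :=
  {k | k < nu ∧ Jm X a k = j}

lemma same_refl {X : Set (Set ℕ)} (hP : IsPartition X) (k : ℕ) : SameBlock X k k := by
  have hk : k ∈ ⋃₀ X := by rw [hP.2.2]; trivial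
  obtain ⟨b, hb, hkb⟩ := hk
  exact ⟨b, hb, hkb, hkb⟩

lemma block_eq {X : Set (Set ℕ)} (hP : IsPartition X) {b c : Set ℕ} {k : ℕ}
    (hb : b ∈ X) (hc : c ∈ X) (hkb : k ∈ b) (hkc : k ∈ c) : b = c := by
  by_contra hne
  exact Set.disjoint_left.mp (hP.2.1 b hb c hc hne) hkb hkc

lemma mem_blk_iff {X : Set (Set ℕ)} (hP : IsPartition X) {b : Set ℕ} {k : ℕ}
    (hb : b ∈ X) (hkb : k ∈ b) : {m | SameBlock X k m} = b := by
  ext m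
  constructor
  · rintro ⟨b', hb', hk', hm'⟩
    rwa [block_eq hP hb' hb hk' hkb] at hm'
  · intro hm
    exact ⟨b, hb, hkb, hm⟩

lemma muX_eq {X : Set (Set ℕ)} (hP : IsPartition X) {b : Set ℕ} {k : ℕ}
    (hb : b ∈ X) (hkb : k ∈ b) : muX X k = sInf b := by
  rw [muX, mem_blk_iff hP hb hkb]

lemma muX_le_self {X : Set (Set ℕ)} (hP : IsPartition X) (k : ℕ) : muX X k ≤ k :=
  Nat.sInf_le (same_refl hP k)

lemma muX_min {X : Set (Set ℕ)} (hP : IsPartition X) {k : ℕ} (h : k ∈ minSet X) :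
    muX X k = k := by
  obtain ⟨b, hb, hl⟩ := h
  rw [muX_eq hP hb hl.1, hl.csInf_eq]

lemma Jm_mem {X : Set (Set ℕ)} {a : Finset ℕ} (k : ℕ) : Jm X a k ∈ insert 0 a :=
  Finset.filter_subset _ _ (Finset.max'_mem _ _)

lemma Jm_le_mu {X : Set (Set ℕ)} {a : Finset ℕ} (k : ℕ) : Jm X a k ≤ muX X k := by
  have h := Finset.max'_mem ((insert 0 a).filter (· ≤ muX X k))
    ⟨0, Finset.mem_filter.mpr ⟨Finset.mem_insert_self _ _, Nat.zero_le _⟩⟩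
  exact (Finset.mem_filter.mp h).2

lemma le_Jm {X : Set (Set ℕ)} {a : Finset ℕ} {j k : ℕ}
    (hj : j ∈ insert 0 a) (h : j ≤ muX X k) : j ≤ Jm X a k := by
  exact Finset.le_max' ((insert 0 a).filter (· ≤ muX X k)) j (Finset.mem_filter.mpr ⟨hj, h⟩)

lemma Jm_self {X : Set (Set ℕ)} {a : Finset ℕ} {j : ℕ}
    (hj : j ∈ insert 0 a) (h : muX X j = j) : Jm X a j = j :=
  le_antisymm ((Jm_le_mu j).trans_eq h) (le_Jm hj h.ge)

lemma Jm_congr {X : Set (Set ℕ)} {a : Finset ℕ} {k k' : ℕ}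
    (h : muX X k = muX X k') : Jm X a k = Jm X a k' := by
  simp only [Jm, h]

lemma eqvgen_eq {r : ℕ → ℕ → Prop} (hr : ∀ x y, r x y → x = y) {a b : ℕ}
    (h : Relation.EqvGen r a b) : a = b := by
  induction h with
  | rel x y hxy => exact hr x y hxy
  | refl x => rfl
  | symm x y _ ih => exact ih.symm
  | trans x y z _ _ ih1 ih2 => exact ih1.trans ih2

end AuxStmt8

lemma singletonPartition_isPartition :
    IsPartition (Set.range fun n => ({n} : Set ℕ)) := by
  refine ⟨?_, ?_, ?_⟩
  · rintro b ⟨n, rfl⟩; exact ⟨n, rfl⟩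
  · rintro b ⟨n, rfl⟩ c ⟨m, rfl⟩ hne
    rw [Set.disjoint_left]
    rintro x rfl hx
    exact hne (by rw [Set.mem_singleton_iff.mp hx])
  · ext k; simp only [Set.mem_univ, iff_true]
    exact ⟨{k}, ⟨k, rfl⟩, rfl⟩

lemma singletonFilter : IsPartitionFilter {Set.range fun n => ({n} : Set ℕ)} := by
  set W : Set (Set ℕ) := Set.range fun n => ({n} : Set ℕ) with hW
  refine ⟨?_, ?_, ?_, ?_⟩
  · intro X hX; rw [Set.mem_singleton_iff.mp hX]; exact singletonPartition_isPartition
  · intro h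
    have h1 : (Set.univ : Set ℕ) ∈ W := by
      rw [← Set.mem_singleton_iff.mp h]; exact rfl
    obtain ⟨m, hm⟩ := h1
    have hm' : ({m} : Set ℕ) = Set.univ := hm
    have h0 : (0 : ℕ) ∈ ({m} : Set ℕ) := by rw [hm']; trivial
    have h2 : (1 : ℕ) ∈ ({m} : Set ℕ) := by rw [hm']; trivial
    simp only [Set.mem_singleton_iff] at h0 h2
    omega
  · intro X hX Y hY
    rw [Set.mem_singleton_iff.mp hX, Set.mem_singleton_iff.mp hY]
    have key : ∀ n m : ℕ,
        Relation.EqvGen (fun a c => SameBlock W a c ∨ SameBlock W a c) n m ↔ n = m := by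
      intro n m
      constructor
      · intro h
        refine eqvgen_eq (fun x y hxy => ?_) h
        rcases hxy with h' | h' <;>
        · obtain ⟨b, ⟨k, rfl⟩, hx, hy⟩ := h'
          simp only [Set.mem_singleton_iff] at hx hy
          omega
      · rintro rfl; exact Relation.EqvGen.refl n
    show pMeet W W ∈ ({W} : Set (Set (Set ℕ)))
    rw [Set.mem_singleton_iff]
    ext b
    constructor
    · rintro ⟨n, rfl⟩
      refine ⟨n, ?_⟩
      ext m
      simp only [Set.mem_singleton_iff, Set.mem_setOf_eq, key]
      omega
    · rintro ⟨n, rfl⟩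
      refine ⟨n, ?_⟩
      ext m
      simp only [Set.mem_singleton_iff, Set.mem_setOf_eq, key]
      omega
  · intro X hX Y hYpart hco
    rw [Set.mem_singleton_iff.mp hX] at hco
    rw [Set.mem_singleton_iff]
    have hsing : ∀ n : ℕ, ({n} : Set ℕ) ∈ Y := by
      intro n
      obtain ⟨S, hS, heq⟩ := hco {n} ⟨n, rfl⟩
      have hn : n ∈ ⋃₀ S := by rw [← heq]; rfl
      obtain ⟨s, hs, hns⟩ := hn
      have hsub : s ⊆ {n} := by
        intro x hx
        rw [heq]; exact ⟨s, hs, hx⟩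
      have : s = {n} := Set.Subset.antisymm hsub (by rintro x rfl; exact hns)
      rw [← this]; exact hS hs
    apply Set.Subset.antisymm
    · intro b hb
      obtain ⟨m, hm⟩ := hYpart.1 b hb
      have : b = {m} := block_eq hYpart hb (hsing m) hm rfl
      exact ⟨m, this.symm⟩
    · rintro _ ⟨n, rfl⟩; exact hsing n

lemma ramseyan_nonempty {U : Set (Set (Set ℕ))} (hU : RamseyanUltrafilter U) :
    U.Nonempty := by
  by_contra h
  rw [Set.not_nonempty_iff_eq_empty] at h
  have := hU.1.2 {Set.range fun n => ({n} : Set ℕ)} singletonFilter (by rw [h]; exact Set.empty_subset _)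
  rw [h] at this
  exact Set.singleton_ne_empty _ this.symm

/-- if `U` is a Ramseyan ultrafilter then `{Min(X) \ {0} : X ∈ U}` is a
Ramsey ultrafilter: every finite coloring of `n`-element sets is monochromatic on the
`n`-element subsets of `Min(X) \ {0}` for some `X ∈ U`. -/
theorem stmt8 (U : Set (Set (Set ℕ))) (hU : RamseyanUltrafilter U)
    (n r : ℕ) (hn : 1 ≤ n) (hr : 1 ≤ r) (τ : Finset ℕ → Fin r) :
    ∃ X ∈ U, ∃ c : Fin r, ∀ a : Finset ℕ,
      a.card = n → (↑a : Set ℕ) ⊆ minSet X \ {0} → τ a = c := by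
  obtain ⟨r', rfl⟩ : ∃ r'', r = r'' + 1 := ⟨r - 1, (Nat.succ_pred_eq_of_pos hr).symm⟩
  obtain ⟨Z, hZ⟩ := ramseyan_nonempty hU
  obtain ⟨X, hX, -, hHom⟩ :=
    hU.2.2 n r' (fun u nu => τ ((minFin u nu).erase 0)) Z hZ
  -- the trivial initial segment {{0}} of domain 1
  have hseg0 : IsSegOf {({0} : Set ℕ)} 1 := by
    refine ⟨?_, ?_, ?_⟩
    · rintro b rfl; exact ⟨0, rfl⟩
    · rintro b rfl c rfl hne; exact absurd rfl hne
    · ext k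
      simp only [Set.sUnion_singleton, Set.mem_singleton_iff, Set.mem_setOf_eq,
        Nat.lt_one_iff]
  have hP : IsPartition X := hU.1.1.1 X hX
  have hinit0 : InitSeg {({0} : Set ℕ)} 1 X := by
    rintro b rfl
    have h0 : (0 : ℕ) ∈ ⋃₀ X := by rw [hP.2.2]; trivial
    obtain ⟨d, hd, h0d⟩ := h0
    refine ⟨d, hd, ?_⟩
    ext k
    simp only [Set.mem_singleton_iff, Set.mem_inter_iff, Set.mem_setOf_eq,
      Nat.lt_one_iff]
    constructor
    · rintro rfl; exact ⟨h0d, rfl⟩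
    · rintro ⟨-, rfl⟩; rfl
  obtain ⟨c, hc⟩ := hHom 0 {({0} : Set ℕ)} 1 hseg0 (Set.ncard_singleton _) hinit0
  refine ⟨X, hX, c, ?_⟩
  intro a hcard hsub
  -- basic facts about a
  have h0a : 0 ∉ a := fun h => (hsub h).2 rfl
  have haMin : ∀ j ∈ a, j ∈ minSet X := fun j hj => (hsub hj).1
  have hane : a.Nonempty := Finset.card_pos.mp (by omega)
  have hMinInf : (minSet X).Infinite := by
    have h1 : (fun b => sInf b) '' X ⊆ minSet X := by
      rintro _ ⟨b, hb, rfl⟩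
      exact ⟨b, hb, Nat.sInf_mem (hP.1 b hb), fun x hx => Nat.sInf_le hx⟩
    have h2 : Set.InjOn (fun b => sInf b) X := by
      intro b hb c hc heq
      have hbne := hP.1 b hb
      have hcne := hP.1 c hc
      have heq' : sInf b = sInf c := heq
      exact block_eq hP hb hc (Nat.sInf_mem hbne) (heq' ▸ Nat.sInf_mem hcne)
    exact ((hU.2.1 X hX).image h2).mono h1
  obtain ⟨nu, hnuMin, hnuGt⟩ := hMinInf.exists_gt (a.max' hane)
  have hjlt : ∀ j ∈ insert 0 a, j < nu := by
    intro j hj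
    rcases Finset.mem_insert.mp hj with rfl | hj
    · omega
    · exact lt_of_le_of_lt (Finset.le_max' a j hj) hnuGt
  have haMu : ∀ j ∈ insert 0 a, muX X j = j := by
    intro j hj
    rcases Finset.mem_insert.mp hj with rfl | hj
    · exact Nat.le_zero.mp (muX_le_self hP 0)
    · exact muX_min hP (haMin j hj)
  have hleast : ∀ j ∈ insert 0 a, IsLeast (Cblk X a nu j) j := by
    intro j hj
    constructor
    · exact ⟨hjlt j hj, Jm_self hj (haMu j hj)⟩
    · rintro k ⟨-, rfl⟩
      exact le_trans (Jm_le_mu k) (muX_le_self hP k)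
  -- the segment u
  set u : Set (Set ℕ) := (fun j => Cblk X a nu j) '' ↑(insert 0 a) with hu
  have hmemu : ∀ j ∈ insert 0 a, Cblk X a nu j ∈ u := by
    intro j hj; exact ⟨j, Finset.mem_coe.mpr hj, rfl⟩
  have hu_seg : IsSegOf u nu := by
    refine ⟨?_, ?_, ?_⟩
    · rintro _ ⟨j, hj, rfl⟩
      exact ⟨j, (hleast j (Finset.mem_coe.mp hj)).1⟩
    · rintro _ ⟨j, hj, rfl⟩ _ ⟨j', hj', rfl⟩ hne
      rw [Set.disjoint_left]
      rintro k ⟨-, rfl⟩ ⟨-, hk'⟩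
      exact hne (by rw [hk'])
    · ext k
      constructor
      · rintro ⟨_, ⟨j, hj, rfl⟩, hk, -⟩; exact hk
      · intro hk
        exact ⟨Cblk X a nu (Jm X a k), hmemu _ (Jm_mem k), hk, rfl⟩
  have hu_card : u.ncard = 0 + n + 1 := by
    have hinj : Set.InjOn (fun j => Cblk X a nu j) ↑(insert 0 a) := by
      intro j hj j' hj' heq
      have heq' : Cblk X a nu j = Cblk X a nu j' := heq
      exact (hleast j (Finset.mem_coe.mp hj)).unique
        (heq' ▸ hleast j' (Finset.mem_coe.mp hj'))
    rw [hu, Set.ncard_image_of_injOn hinj, Set.ncard_coe_finset,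
      Finset.card_insert_of_notMem h0a, hcard]
    omega
  have hu_init : InitSeg {({0} : Set ℕ)} 1 u := by
    rintro b rfl
    refine ⟨Cblk X a nu 0, hmemu 0 (Finset.mem_insert_self _ _), ?_⟩
    ext k
    simp only [Set.mem_singleton_iff, Set.mem_inter_iff, Set.mem_setOf_eq,
      Nat.lt_one_iff]
    constructor
    · rintro rfl; exact ⟨(hleast 0 (Finset.mem_insert_self _ _)).1, rfl⟩
    · rintro ⟨-, rfl⟩; rfl
  have hu_coar : SegCoarser (segExt u nu) (nu + 1) X := by
    intro b hb
    rcases Set.mem_insert_iff.mp hb with rfl | hbu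
    · -- the new block {nu}
      obtain ⟨bb, hbb, hbl⟩ := hnuMin
      refine ⟨{bb}, Set.singleton_subset_iff.mpr hbb, ?_⟩
      ext k
      simp only [Set.mem_singleton_iff, Set.mem_inter_iff, Set.sUnion_singleton,
        Set.mem_setOf_eq]
      constructor
      · rintro rfl; exact ⟨hbl.1, Nat.lt_succ_self _⟩
      · rintro ⟨hk, hk1⟩
        exact le_antisymm (Nat.lt_succ_iff.mp hk1) (hbl.2 hk)
    · obtain ⟨j, hj, rfl⟩ := hbu
      refine ⟨{bb | bb ∈ X ∧ bb.Nonempty ∧ sInf bb < nu ∧ Jm X a (sInf bb) = j},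
        fun bb hbb => hbb.1, ?_⟩
      ext k
      constructor
      · rintro ⟨hklt, hkJ⟩
        have hk : k ∈ ⋃₀ X := by rw [hP.2.2]; trivial
        obtain ⟨bb, hbbX, hkbb⟩ := hk
        have hmu : muX X k = sInf bb := muX_eq hP hbbX hkbb
        have hsmem : sInf bb ∈ bb := Nat.sInf_mem ⟨k, hkbb⟩
        have hmu2 : muX X (sInf bb) = sInf bb := muX_eq hP hbbX hsmem
        have hJb : Jm X a (sInf bb) = j := by
          rw [Jm_congr (hmu2.trans hmu.symm), hkJ]
        refine ⟨⟨bb, ⟨hbbX, ⟨k, hkbb⟩, ?_, hJb⟩, hkbb⟩, Nat.lt_succ_of_lt hklt⟩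
        · calc sInf bb = muX X k := hmu.symm
            _ ≤ k := muX_le_self hP k
            _ < nu := hklt
      · rintro ⟨⟨bb, ⟨hbbX, hbne, hslt, hsJ⟩, hkbb⟩, hklt1⟩
        have hmu : muX X k = sInf bb := muX_eq hP hbbX hkbb
        have hsmem : sInf bb ∈ bb := Nat.sInf_mem hbne
        have hmu2 : muX X (sInf bb) = sInf bb := muX_eq hP hbbX hsmem
        have hJk : Jm X a k = j := by
          rw [Jm_congr (hmu.trans hmu2.symm), hsJ]
        refine ⟨?_, hJk⟩
        rcases lt_or_eq_of_le (Nat.lt_succ_iff.mp hklt1) with h | h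
        · exact h
        · exfalso
          subst h
          have := muX_min hP hnuMin
          omega
  have hminFin : minFin u nu = insert 0 a := by
    ext k
    simp only [minFin, Finset.mem_filter, Finset.mem_range]
    constructor
    · rintro ⟨hk, _, ⟨j, hj, rfl⟩, hl⟩
      have : k = j := hl.unique (hleast j (Finset.mem_coe.mp hj))
      rw [this]; exact Finset.mem_coe.mp hj
    · intro hk
      exact ⟨hjlt k hk, Cblk X a nu k, hmemu k hk, hleast k hk⟩
  have hfinal := hc u nu hu_seg hu_card hu_init hu_coar
  simp only [hminFin, Finset.erase_insert h0a] at hfinal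
  exact hfinal
end

section
/- If U is a Ramseyan ultrafilter, then for any surjection f : ω → ω there exists X ∈ U such that f either respects X (f⁻¹(f(X)) = X) or completely disregards X (f⁻¹(f(X)) = {ω}). -/
open Set

-- ===================== auxiliary development =====================
namespace Stmt9Aux

/-- The kernel partition of `f`: its fibers. -/
def Fibers (f : ℕ → ℕ) : Set (Set ℕ) := {c | ∃ k, c = f ⁻¹' {k}}

/-- classes of the equivalence relation generated by `r` -/
def classes (r : ℕ → ℕ → Prop) : Set (Set ℕ) :=
  {b | ∃ n, b = {m | Relation.EqvGen r n m}}

lemma pMeet_eq_classes (X Y : Set (Set ℕ)) :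
    pMeet X Y = classes (fun a c => SameBlock X a c ∨ SameBlock Y a c) := rfl

lemma sameBlock_symm {X : Set (Set ℕ)} {n m : ℕ} (h : SameBlock X n m) :
    SameBlock X m n := by
  obtain ⟨b, hb, h1, h2⟩ := h; exact ⟨b, hb, h2, h1⟩

lemma sameBlock_refl {X : Set (Set ℕ)} (hX : IsPartition X) (n : ℕ) :
    SameBlock X n n := by
  have : (n : ℕ) ∈ ⋃₀ X := by rw [hX.2.2]; trivial
  obtain ⟨b, hb, hn⟩ := this
  exact ⟨b, hb, hn, hn⟩

lemma sameBlock_trans {X : Set (Set ℕ)} (hX : IsPartition X) {n m p : ℕ}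
    (h1 : SameBlock X n m) (h2 : SameBlock X m p) : SameBlock X n p := by
  obtain ⟨b, hb, hn, hm⟩ := h1
  obtain ⟨c, hc, hm', hp⟩ := h2
  have hbc : b = c := by
    by_contra hne
    exact (hX.2.1 b hb c hc hne).le_bot ⟨hm, hm'⟩
  exact ⟨b, hb, hn, hbc ▸ hp⟩

lemma eqvGen_mono' {r r' : ℕ → ℕ → Prop}
    (h : ∀ a b, r a b → Relation.EqvGen r' a b) {a b : ℕ}
    (hab : Relation.EqvGen r a b) : Relation.EqvGen r' a b := by
  induction hab with
  | rel x y hxy => exact h x y hxy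
  | refl x => exact Relation.EqvGen.refl x
  | symm x y _ ih => exact Relation.EqvGen.symm x y ih
  | trans x y z _ _ ih1 ih2 => exact Relation.EqvGen.trans x y z ih1 ih2

lemma mem_class_self (r : ℕ → ℕ → Prop) (n : ℕ) :
    n ∈ {m | Relation.EqvGen r n m} := Relation.EqvGen.refl n

lemma class_eq_of_rel {r : ℕ → ℕ → Prop} {n₁ n₂ : ℕ}
    (h : Relation.EqvGen r n₁ n₂) :
    {m | Relation.EqvGen r n₁ m} = {m | Relation.EqvGen r n₂ m} := by
  ext p
  exact ⟨fun hp => Relation.EqvGen.trans _ _ _ (Relation.EqvGen.symm _ _ h) hp,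
    fun hp => Relation.EqvGen.trans _ _ _ h hp⟩

lemma isPartition_classes (r : ℕ → ℕ → Prop) : IsPartition (classes r) := by
  refine ⟨?_, ?_, ?_⟩
  · rintro b ⟨n, rfl⟩
    exact ⟨n, mem_class_self r n⟩
  · rintro b ⟨n₁, rfl⟩ c ⟨n₂, rfl⟩ hne
    rw [Set.disjoint_left]
    intro m h1 h2
    exact hne (class_eq_of_rel (Relation.EqvGen.trans _ _ _ h1 (Relation.EqvGen.symm _ _ h2)))
  · ext n
    simp only [Set.mem_sUnion, Set.mem_univ, iff_true]
    exact ⟨_, ⟨n, rfl⟩, mem_class_self r n⟩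

lemma isPartition_pMeet (X Y : Set (Set ℕ)) : IsPartition (pMeet X Y) :=
  isPartition_classes _

lemma sameBlock_classes {r : ℕ → ℕ → Prop} {n m : ℕ} :
    SameBlock (classes r) n m ↔ Relation.EqvGen r n m := by
  constructor
  · rintro ⟨b, ⟨p, rfl⟩, hn, hm⟩
    exact Relation.EqvGen.trans _ _ _ (Relation.EqvGen.symm _ _ hn) hm
  · intro h
    exact ⟨_, ⟨n, rfl⟩, mem_class_self r n, h⟩

/-- each class of `EqvGen r` is a union of blocks of a partition `Z`,
provided `Z`-relatedness implies `EqvGen r`-relatedness. -/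
lemma classes_coarser {r : ℕ → ℕ → Prop} {Z : Set (Set ℕ)} (hZ : IsPartition Z)
    (h : ∀ n m, SameBlock Z n m → Relation.EqvGen r n m) :
    Coarser (classes r) Z := by
  rintro b ⟨n, rfl⟩
  refine ⟨{c ∈ Z | c ⊆ {m | Relation.EqvGen r n m}}, fun c hc => hc.1, ?_⟩
  ext m
  constructor
  · intro hm
    have : (m : ℕ) ∈ ⋃₀ Z := by rw [hZ.2.2]; trivial
    obtain ⟨c, hc, hmc⟩ := this
    refine ⟨c, ⟨hc, fun p hp => ?_⟩, hmc⟩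
    exact Relation.EqvGen.trans _ _ _ hm (h m p ⟨c, hc, hmc, hp⟩)
  · rintro ⟨c, ⟨hc, hsub⟩, hmc⟩
    exact hsub hmc

lemma coarser_pMeet_left {X : Set (Set ℕ)} (Y : Set (Set ℕ)) (hX : IsPartition X) :
    Coarser (pMeet X Y) X :=
  classes_coarser hX (fun _ _ h => Relation.EqvGen.rel _ _ (Or.inl h))

lemma coarser_pMeet_right (X : Set (Set ℕ)) {Y : Set (Set ℕ)} (hY : IsPartition Y) :
    Coarser (pMeet X Y) Y :=
  classes_coarser hY (fun _ _ h => Relation.EqvGen.rel _ _ (Or.inr h))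

lemma sameBlock_of_coarser {W Z : Set (Set ℕ)} (hW : IsPartition W) (hZ : IsPartition Z)
    (hC : Coarser W Z) {n m : ℕ} (h : SameBlock Z n m) : SameBlock W n m := by
  obtain ⟨b, hb, hn, hm⟩ := h
  have : (n : ℕ) ∈ ⋃₀ W := by rw [hW.2.2]; trivial
  obtain ⟨c, hc, hnc⟩ := this
  obtain ⟨S, hS, rfl⟩ := hC c hc
  obtain ⟨b', hb'S, hnb'⟩ := hnc
  have hbb' : b = b' := by
    by_contra hne
    exact (hZ.2.1 b hb b' (hS hb'S) hne).le_bot ⟨hn, hnb'⟩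
  exact ⟨_, hc, ⟨b', hb'S, hnb'⟩, ⟨b', hb'S, hbb' ▸ hm⟩⟩

lemma coarser_trans {W Z Y : Set (Set ℕ)} (h1 : Coarser W Z) (h2 : Coarser Z Y) :
    Coarser W Y := by
  intro b hb
  obtain ⟨S, hS, rfl⟩ := h1 b hb
  choose T hT hTeq using fun c (hc : c ∈ S) => h2 c (hS hc)
  refine ⟨{d | ∃ c, ∃ hc : c ∈ S, d ∈ T c hc}, ?_, ?_⟩
  · rintro d ⟨c, hc, hd⟩
    exact hT c hc hd
  · ext x
    simp only [Set.mem_sUnion]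
    constructor
    · rintro ⟨c, hcS, hxc⟩
      rw [hTeq c hcS] at hxc
      obtain ⟨d, hd, hxd⟩ := hxc
      exact ⟨d, ⟨c, hcS, hd⟩, hxd⟩
    · rintro ⟨d, ⟨c, hcS, hd⟩, hxd⟩
      refine ⟨c, hcS, ?_⟩
      rw [hTeq c hcS]
      exact ⟨d, hd, hxd⟩

lemma eq_oneBlock_of_coarser {W : Set (Set ℕ)} (hW : IsPartition W)
    (h : Coarser W OneBlock) : W = OneBlock := by
  have hsub : ∀ b ∈ W, b = Set.univ := by
    intro b hb
    obtain ⟨S, hS, rfl⟩ := h b hb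
    have hne := hW.1 _ hb
    rcases Set.eq_empty_or_nonempty S with rfl | ⟨c, hc⟩
    · simp only [Set.sUnion_empty] at hne
      exact absurd hne (by simp)
    · have : c = Set.univ := hS hc
      subst this
      apply Set.eq_univ_of_univ_subset
      exact Set.subset_sUnion_of_mem hc
  have h0 : (0 : ℕ) ∈ ⋃₀ W := by rw [hW.2.2]; trivial
  obtain ⟨b, hb, _⟩ := h0
  have hbu := hsub b hb
  subst hbu
  ext c
  constructor
  · intro hc
    exact hsub c hc
  · rintro rfl
    exact hb

lemma pMeet_self {X : Set (Set ℕ)} (hX : IsPartition X) : pMeet X X = X := by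
  have key : ∀ n m, Relation.EqvGen (fun a c => SameBlock X a c ∨ SameBlock X a c) n m
      ↔ SameBlock X n m := by
    intro n m
    constructor
    · intro h
      induction h with
      | rel x y hxy => exact hxy.elim id id
      | refl x => exact sameBlock_refl hX x
      | symm x y _ ih => exact sameBlock_symm ih
      | trans x y z _ _ ih1 ih2 => exact sameBlock_trans hX ih1 ih2
    · exact fun h => Relation.EqvGen.rel _ _ (Or.inl h)
  have class_eq : ∀ n b, b ∈ X → n ∈ b →
      {m | Relation.EqvGen (fun a c => SameBlock X a c ∨ SameBlock X a c) n m} = b := by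
    intro n b hb hn
    ext m
    rw [Set.mem_setOf_eq, key]
    constructor
    · rintro ⟨b', hb', hnb', hmb'⟩
      have : b = b' := by
        by_contra hne
        exact (hX.2.1 b hb b' hb' hne).le_bot ⟨hn, hnb'⟩
      exact this ▸ hmb'
    · intro hm
      exact ⟨b, hb, hn, hm⟩
  ext b
  constructor
  · rintro ⟨n, rfl⟩
    have : (n : ℕ) ∈ ⋃₀ X := by rw [hX.2.2]; trivial
    obtain ⟨b₀, hb₀, hn⟩ := this
    rw [class_eq n b₀ hb₀ hn]
    exact hb₀
  · intro hb
    obtain ⟨n, hn⟩ := hX.1 b hb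
    exact ⟨n, (class_eq n b hb hn).symm⟩

lemma isPartition_fibers {f : ℕ → ℕ} (hf : Function.Surjective f) :
    IsPartition (Fibers f) := by
  refine ⟨?_, ?_, ?_⟩
  · rintro b ⟨k, rfl⟩
    obtain ⟨n, hn⟩ := hf k
    exact ⟨n, by simp [hn]⟩
  · rintro b ⟨k, rfl⟩ c ⟨l, rfl⟩ hne
    rw [Set.disjoint_left]
    rintro m (hm : f m = k) (hm' : f m = l)
    exact hne (by rw [← hm, ← hm'])
  · ext n
    simp only [Set.mem_sUnion, Set.mem_univ, iff_true]
    exact ⟨f ⁻¹' {f n}, ⟨f n, rfl⟩, rfl⟩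

lemma sameBlock_fibers {f : ℕ → ℕ} {n m : ℕ} :
    SameBlock (Fibers f) n m ↔ f n = f m := by
  constructor
  · rintro ⟨b, ⟨k, rfl⟩, (hn : f n = k), (hm : f m = k)⟩
    rw [hn, hm]
  · intro h
    exact ⟨f ⁻¹' {f n}, ⟨f n, rfl⟩, rfl, h.symm⟩

section Key

variable {f : ℕ → ℕ} (hf : Function.Surjective f) (X : Set (Set ℕ))

/-- relation on the codomain -/
private def R (f : ℕ → ℕ) (X : Set (Set ℕ)) : ℕ → ℕ → Prop :=
  fun a b => ∃ n m, SameBlock X n m ∧ f n = a ∧ f m = b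

/-- relation on the domain -/
private def S' (f : ℕ → ℕ) (X : Set (Set ℕ)) : ℕ → ℕ → Prop :=
  fun a c => SameBlock X a c ∨ SameBlock (Fibers f) a c

lemma toR {n m : ℕ} (h : Relation.EqvGen (S' f X) n m) :
    Relation.EqvGen (R f X) (f n) (f m) := by
  induction h with
  | rel x y hxy =>
    rcases hxy with hxy | hxy
    · exact Relation.EqvGen.rel _ _ ⟨x, y, hxy, rfl, rfl⟩
    · rw [sameBlock_fibers.mp hxy]
      exact Relation.EqvGen.refl _
  | refl x => exact Relation.EqvGen.refl _
  | symm x y _ ih => exact Relation.EqvGen.symm _ _ ih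
  | trans x y z _ _ ih1 ih2 => exact Relation.EqvGen.trans _ _ _ ih1 ih2

include hf in
lemma toS {a b : ℕ} (h : Relation.EqvGen (R f X) a b) :
    ∀ n m : ℕ, f n = a → f m = b → Relation.EqvGen (S' f X) n m := by
  induction h with
  | rel x y hxy =>
    rintro n m rfl rfl
    obtain ⟨n', m', hbl, ha, hb⟩ := hxy
    refine Relation.EqvGen.trans _ _ _
      (Relation.EqvGen.rel _ _ (Or.inr (sameBlock_fibers.mpr ha.symm)))
      (Relation.EqvGen.trans _ _ _ (Relation.EqvGen.rel _ _ (Or.inl hbl))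
        (Relation.EqvGen.rel _ _ (Or.inr (sameBlock_fibers.mpr hb))))
  | refl x =>
    rintro n m rfl hm
    exact Relation.EqvGen.rel _ _ (Or.inr (sameBlock_fibers.mpr hm.symm))
  | symm x y _ ih =>
    intro n m hn hm
    exact Relation.EqvGen.symm _ _ (ih m n hm hn)
  | trans x y z _ _ ih1 ih2 =>
    intro n m hn hm
    obtain ⟨p, hp⟩ := hf y
    exact Relation.EqvGen.trans _ _ _ (ih1 n p hn hp) (ih2 p m hp hm)

include hf in
lemma key_identity : preimagePart f (imagePart f X) = pMeet X (Fibers f) := by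
  have main : ∀ n : ℕ,
      f ⁻¹' {l | Relation.EqvGen (R f X) (f n) l} = {m | Relation.EqvGen (S' f X) n m} := by
    intro n
    ext m
    simp only [Set.mem_preimage, Set.mem_setOf_eq]
    constructor
    · intro h
      exact toS hf X h n m rfl rfl
    · intro h
      exact toR X h
  ext c
  constructor
  · rintro ⟨b, ⟨k, rfl⟩, rfl⟩
    obtain ⟨n, rfl⟩ := hf k
    exact ⟨n, (main n).symm ▸ rfl⟩
  · rintro ⟨n, rfl⟩
    exact ⟨{l | Relation.EqvGen (R f X) (f n) l}, ⟨f n, rfl⟩, (main n).symm⟩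

end Key

/-- The singleton partition. -/
def Sing : Set (Set ℕ) := {b | ∃ n : ℕ, b = {n}}

lemma isPartition_sing : IsPartition Sing := by
  refine ⟨?_, ?_, ?_⟩
  · rintro b ⟨n, rfl⟩; exact ⟨n, rfl⟩
  · rintro b ⟨n, rfl⟩ c ⟨m, rfl⟩ hne
    rw [Set.disjoint_left]
    rintro p rfl hp
    simp only [Set.mem_singleton_iff] at hp
    exact hne (by rw [hp])
  · ext n
    simp only [Set.mem_sUnion, Set.mem_univ, iff_true]
    exact ⟨{n}, ⟨n, rfl⟩, rfl⟩

lemma filter_sing : IsPartitionFilter {Sing} := by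
  have coarser_sing : ∀ Y, IsPartition Y → Coarser Sing Y → Y = Sing := by
    intro Y hY hC
    have hsub : ∀ c ∈ Y, c ∈ Sing := by
      intro c hc
      obtain ⟨n, hn⟩ := hY.1 c hc
      obtain ⟨S, hS, hSeq⟩ := hC {n} ⟨n, rfl⟩
      have hn' : n ∈ ⋃₀ S := hSeq ▸ rfl
      obtain ⟨b', hb'S, hnb'⟩ := hn'
      have hb'sub : b' ⊆ {n} := hSeq ▸ Set.subset_sUnion_of_mem hb'S
      have : b' = c := by
        by_contra hne
        exact (hY.2.1 b' (hS hb'S) c hc hne).le_bot ⟨hnb', hn⟩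
      refine ⟨n, ?_⟩
      rw [← this]
      exact Set.Subset.antisymm hb'sub (by simpa using hnb')
    apply Set.Subset.antisymm hsub
    rintro b ⟨n, rfl⟩
    have : (n : ℕ) ∈ ⋃₀ Y := by rw [hY.2.2]; trivial
    obtain ⟨c, hc, hnc⟩ := this
    obtain ⟨m, rfl⟩ := hsub c hc
    simp only [Set.mem_singleton_iff] at hnc
    subst hnc
    exact hc
  refine ⟨?_, ?_, ?_, ?_⟩
  · rintro X rfl; exact isPartition_sing
  · intro h
    rw [Set.mem_singleton_iff] at h
    have : Set.univ ∈ Sing := h ▸ rfl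
    obtain ⟨n, hn⟩ := this
    have : (n + 1 : ℕ) ∈ ({n} : Set ℕ) := hn ▸ Set.mem_univ _
    simp at this
  · rintro X rfl Y rfl
    rw [Set.mem_singleton_iff, pMeet_self isPartition_sing]
  · rintro X rfl Y hY hC
    rw [Set.mem_singleton_iff]
    exact coarser_sing Y hY hC


lemma sameBlock_pMeet_left' {X1 : Set (Set ℕ)} (X2 : Set (Set ℕ)) {a b : ℕ}
    (h : SameBlock X1 a b) : SameBlock (pMeet X1 X2) a b := by
  rw [pMeet_eq_classes]
  exact sameBlock_classes.mpr (Relation.EqvGen.rel _ _ (Or.inl h))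

lemma sameBlock_pMeet_right' (X1 : Set (Set ℕ)) {X2 : Set (Set ℕ)} {a b : ℕ}
    (h : SameBlock X2 a b) : SameBlock (pMeet X1 X2) a b := by
  rw [pMeet_eq_classes]
  exact sameBlock_classes.mpr (Relation.EqvGen.rel _ _ (Or.inr h))

end Stmt9Aux

/-- if `U` is a Ramseyan ultrafilter, every surjection `f` either respects
or completely disregards some member of `U`. -/
theorem stmt9 (U : Set (Set (Set ℕ))) (hU : RamseyanUltrafilter U)
    (f : ℕ → ℕ) (hf : Function.Surjective f) :
    ∃ X ∈ U, preimagePart f (imagePart f X) = X ∨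
      preimagePart f (imagePart f X) = OneBlock := by
  obtain ⟨⟨hFilt, hMax⟩, hInf, hSeg⟩ := hU
  obtain ⟨hPart, hOne, hMeet, hUp⟩ := hFilt
  have hKpart : IsPartition (Stmt9Aux.Fibers f) := Stmt9Aux.isPartition_fibers hf
  by_cases hcase : ∃ X ∈ U, pMeet X (Stmt9Aux.Fibers f) = OneBlock
  · obtain ⟨X, hXU, hXK⟩ := hcase
    exact ⟨X, hXU, Or.inr (by rw [Stmt9Aux.key_identity hf X, hXK])⟩
  · push_neg at hcase
    have hne : U.Nonempty := by
      rcases Set.eq_empty_or_nonempty U with h | h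
      · exfalso
        have heq := hMax {Stmt9Aux.Sing} Stmt9Aux.filter_sing (h ▸ Set.empty_subset _)
        exact (Set.singleton_nonempty Stmt9Aux.Sing).ne_empty (heq ▸ h)
      · exact h
    obtain ⟨X₀, hX₀⟩ := hne
    set F' : Set (Set (Set ℕ)) :=
      {Z | IsPartition Z ∧ ∃ X ∈ U, Coarser (pMeet X (Stmt9Aux.Fibers f)) Z} with hF'
    have hUF' : U ⊆ F' := fun X hX =>
      ⟨hPart X hX, X, hX, Stmt9Aux.coarser_pMeet_left _ (hPart X hX)⟩
    have hF'filt : IsPartitionFilter F' := by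
      refine ⟨fun Z hZ => hZ.1, ?_, ?_, ?_⟩
      · rintro ⟨hOB, X, hXU, hC⟩
        exact hcase X hXU
          (Stmt9Aux.eq_oneBlock_of_coarser (Stmt9Aux.isPartition_pMeet X _) hC)
      · rintro Z1 ⟨hP1, X1, hX1U, hC1⟩ Z2 ⟨hP2, X2, hX2U, hC2⟩
        refine ⟨Stmt9Aux.isPartition_pMeet Z1 Z2, pMeet X1 X2, hMeet X1 hX1U X2 hX2U, ?_⟩
        rw [Stmt9Aux.pMeet_eq_classes (pMeet X1 X2) (Stmt9Aux.Fibers f)]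
        apply Stmt9Aux.classes_coarser (Stmt9Aux.isPartition_pMeet Z1 Z2)
        intro n m hnm
        rw [Stmt9Aux.pMeet_eq_classes Z1 Z2] at hnm
        have hE := Stmt9Aux.sameBlock_classes.mp hnm
        refine Stmt9Aux.eqvGen_mono' ?_ hE
        rintro a b (h | h)
        · have h1 : SameBlock (pMeet X1 (Stmt9Aux.Fibers f)) a b :=
            Stmt9Aux.sameBlock_of_coarser (Stmt9Aux.isPartition_pMeet X1 _) hP1 hC1 h
          rw [Stmt9Aux.pMeet_eq_classes X1 (Stmt9Aux.Fibers f)] at h1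
          refine Stmt9Aux.eqvGen_mono' ?_ (Stmt9Aux.sameBlock_classes.mp h1)
          rintro x y (hxy | hxy)
          · exact Relation.EqvGen.rel _ _ (Or.inl (Stmt9Aux.sameBlock_pMeet_left' X2 hxy))
          · exact Relation.EqvGen.rel _ _ (Or.inr hxy)
        · have h1 : SameBlock (pMeet X2 (Stmt9Aux.Fibers f)) a b :=
            Stmt9Aux.sameBlock_of_coarser (Stmt9Aux.isPartition_pMeet X2 _) hP2 hC2 h
          rw [Stmt9Aux.pMeet_eq_classes X2 (Stmt9Aux.Fibers f)] at h1
          refine Stmt9Aux.eqvGen_mono' ?_ (Stmt9Aux.sameBlock_classes.mp h1)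
          rintro x y (hxy | hxy)
          · exact Relation.EqvGen.rel _ _ (Or.inl (Stmt9Aux.sameBlock_pMeet_right' X1 hxy))
          · exact Relation.EqvGen.rel _ _ (Or.inr hxy)
      · rintro Z ⟨hPZ, X, hXU, hC⟩ Y hPY hCY
        exact ⟨hPY, X, hXU, Stmt9Aux.coarser_trans hC hCY⟩
    have hEq : U = F' := hMax F' hF'filt hUF'
    have hKF' : Stmt9Aux.Fibers f ∈ F' :=
      ⟨hKpart, X₀, hX₀, Stmt9Aux.coarser_pMeet_right X₀ hKpart⟩
    refine ⟨Stmt9Aux.Fibers f, hEq ▸ hKF', Or.inl ?_⟩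
    rw [Stmt9Aux.key_identity hf (Stmt9Aux.Fibers f)]
    exact Stmt9Aux.pMeet_self hKpart
end

section
/- Corollary to the Dual Ramsey Theorem (relativized version): for any r, n, k ∈ ω, any coloring π of the (n+k+1)-block segments with r + 1 colors, and any dual Ellentuck neighborhood (s, Y)^ω with |s| = n + 1, there is an infinite partition X ∈ (s, Y)^ω such that the set of (n+k+1)-block segments u with s ⊴ u and u* ⊑ X is monochromatic with respect to π. -/
open Set

namespace S18x

/-- block uniqueness in a pairwise disjoint family -/
lemma uniq {A : Set (Set ℕ)} (hd : ∀ b ∈ A, ∀ c ∈ A, b ≠ c → Disjoint b c)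
    {b c : Set ℕ} (hb : b ∈ A) (hc : c ∈ A) {x : ℕ} (hxb : x ∈ b) (hxc : x ∈ c) : b = c := by
  by_contra h
  exact Set.disjoint_left.mp (hd b hb c hc h) hxb hxc

/-- enumeration of an infinite pairwise disjoint family of nonempty sets by increasing sInf -/
noncomputable def blkEnum (F : Set (Set ℕ)) (i : ℕ) : Set ℕ :=
  ⋃₀ {d ∈ F | sInf d = Nat.nth (· ∈ sInf '' F) i}

lemma blkEnum_spec (F : Set (Set ℕ)) (hne : ∀ d ∈ F, d.Nonempty)
    (hdisj : ∀ b ∈ F, ∀ c ∈ F, b ≠ c → Disjoint b c) (hinf : F.Infinite) :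
    (∀ i, blkEnum F i ∈ F) ∧ StrictMono (fun i => sInf (blkEnum F i)) ∧
      (∀ d ∈ F, ∃ i, blkEnum F i = d) := by
  have hsinj : Set.InjOn sInf F := by
    intro a ha b hb hab
    exact uniq hdisj ha hb (Nat.sInf_mem (hne a ha)) (hab ▸ Nat.sInf_mem (hne b hb))
  have hMinf : {x | x ∈ sInf '' F}.Infinite := hinf.image hsinj
  have hspec : ∀ i, blkEnum F i ∈ F ∧ sInf (blkEnum F i) = Nat.nth (· ∈ sInf '' F) i := by
    intro i
    have hm : Nat.nth (· ∈ sInf '' F) i ∈ sInf '' F := Nat.nth_mem_of_infinite hMinf i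
    obtain ⟨d, hdF, hd⟩ := hm
    have hset : {d' ∈ F | sInf d' = Nat.nth (· ∈ sInf '' F) i} = {d} := by
      ext d'
      constructor
      · rintro ⟨hd'F, hd'⟩
        exact hsinj hd'F hdF (by rw [hd', hd])
      · rintro rfl
        exact ⟨hdF, hd⟩
    rw [blkEnum, hset, Set.sUnion_singleton]
    exact ⟨hdF, hd⟩
  refine ⟨fun i => (hspec i).1, ?_, ?_⟩
  · intro a b hab
    simp only [(hspec a).2, (hspec b).2]
    exact (Nat.nth_lt_nth hMinf).mpr hab
  · intro d hd
    have : sInf d ∈ Set.range (Nat.nth (· ∈ sInf '' F)) := by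
      rw [Nat.range_nth_of_infinite hMinf]
      exact ⟨d, hd, rfl⟩
    obtain ⟨i, hi⟩ := this
    refine ⟨i, hsinj (hspec i).1 hd ?_⟩
    rw [(hspec i).2, hi]


/-- the transported partition blocks: letter blocks (i ≤ n) carry `L i`,
and block `i` collects `E j` for `j ∈ C i`. -/
def trX (L E C : ℕ → Set ℕ) (n i : ℕ) : Set ℕ :=
  (if i ≤ n then L i else ∅) ∪ ⋃ j ∈ C i, E j

def bigX (L E C : ℕ → Set ℕ) (n : ℕ) : Set (Set ℕ) := Set.range (trX L E C n)

def cellOf (E : ℕ → Set ℕ) (nw : ℕ) (B : Set ℕ) : Set ℕ := {j | j < nw ∧ sInf (E j) ∈ B}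

noncomputable def rnk (w : Set (Set ℕ)) (B : Set ℕ) : ℕ :=
  ((sInf '' w) ∩ Set.Iio (sInf B)).ncard

noncomputable def decBlock (L : ℕ → Set ℕ) (n : ℕ) (E : ℕ → Set ℕ) (w : Set (Set ℕ))
    (ν : ℕ) (B : Set ℕ) : Set ℕ :=
  ((⋃ j ∈ B, E j) ∪ (if rnk w B ≤ n then L (rnk w B) else ∅)) ∩ Set.Iio ν

noncomputable def decSeg (L : ℕ → Set ℕ) (n : ℕ) (E : ℕ → Set ℕ) (w : Set (Set ℕ))
    (nbar : ℕ) : Set (Set ℕ) :=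
  (decBlock L n E w (sInf (E nbar))) '' w

section Main

variable {L E C : ℕ → Set ℕ} {n ns : ℕ}

/-- pairwise disjointness of the transported blocks -/
lemma trX_disj
    (hLdisj : ∀ i ≤ n, ∀ i' ≤ n, i ≠ i' → Disjoint (L i) (L i'))
    (hLE : ∀ i ≤ n, ∀ j, Disjoint (L i) (E j))
    (hEdisj : ∀ j j', j ≠ j' → Disjoint (E j) (E j'))
    (hCdisj : ∀ i i', i ≠ i' → Disjoint (C i) (C i')) :
    ∀ a b, a ≠ b → Disjoint (trX L E C n a) (trX L E C n b) := by
  intro a b hab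
  rw [Set.disjoint_left]
  rintro x (hx | hx) (hy | hy)
  · by_cases h1 : a ≤ n
    · by_cases h2 : b ≤ n
      · rw [if_pos h1] at hx; rw [if_pos h2] at hy
        exact Set.disjoint_left.mp (hLdisj a h1 b h2 hab) hx hy
      · rw [if_neg h2] at hy; exact hy
    · rw [if_neg h1] at hx; exact hx
  · by_cases h1 : a ≤ n
    · rw [if_pos h1] at hx
      obtain ⟨j, hj, hxj⟩ := Set.mem_iUnion₂.mp hy
      exact Set.disjoint_left.mp (hLE a h1 j) hx hxj
    · rw [if_neg h1] at hx; exact hx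
  · by_cases h1 : b ≤ n
    · rw [if_pos h1] at hy
      obtain ⟨j, hj, hxj⟩ := Set.mem_iUnion₂.mp hx
      exact Set.disjoint_left.mp (hLE b h1 j) hy hxj
    · rw [if_neg h1] at hy; exact hy
  · obtain ⟨j, hj, hxj⟩ := Set.mem_iUnion₂.mp hx
    obtain ⟨j', hj', hxj'⟩ := Set.mem_iUnion₂.mp hy
    have hjj : j = j' := by
      by_contra hne
      exact Set.disjoint_left.mp (hEdisj j j' hne) hxj hxj'
    subst hjj
    exact Set.disjoint_left.mp (hCdisj a b hab) (by exact hj) hj'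

end Main

lemma key
    {L E C : ℕ → Set ℕ} {n ns k r : ℕ}
    (s : Set (Set ℕ)) (π : Set (Set ℕ) → ℕ → Fin (r+1))
    (Xb : Set (Set ℕ)) (c : Fin (r+1))
    (hs : IsSegOf s ns)
    (hLs : ∀ i ≤ n, L i ∩ {x | x < ns} ∈ s)
    (hLinj : ∀ i ≤ n, ∀ i' ≤ n, L i ∩ {x | x < ns} = L i' ∩ {x | x < ns} → i = i')
    (hLcov : ∀ b ∈ s, ∃ i ≤ n, L i ∩ {x | x < ns} = b)
    (hLdisj : ∀ i ≤ n, ∀ i' ≤ n, i ≠ i' → Disjoint (L i) (L i'))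
    (hLE : ∀ i ≤ n, ∀ j, Disjoint (L i) (E j))
    (hEne : ∀ j, (E j).Nonempty)
    (hEdisj : ∀ j j', j ≠ j' → Disjoint (E j) (E j'))
    (hEmono : StrictMono fun j => sInf (E j))
    (hCmem : ∀ i, C i ∈ Xb)
    (hCsurj : ∀ d ∈ Xb, ∃ i, C i = d)
    (hCne : ∀ i, (C i).Nonempty)
    (hCdisj : ∀ i i', i ≠ i' → Disjoint (C i) (C i'))
    (hCmono : StrictMono fun i => sInf (C i))
    (hCcov : ∀ j : ℕ, ∃ i, j ∈ C i)
    (hXbdisj : ∀ b ∈ Xb, ∀ c' ∈ Xb, b ≠ c' → Disjoint b c')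
    (hmono : ∀ w nw, IsSegOf w nw → w.ncard = n+k+1 → SegCoarser (segExt w nw) (nw+1) Xb →
        π (decSeg L n E w nw) (sInf (E nw)) = c) :
    ∀ u nu, IsSegOf u nu → u.ncard = n + k + 1 → InitSeg s ns u →
      SegCoarser (segExt u nu) (nu + 1) (bigX L E C n) → π u nu = c := by
  intro u nu hu hucard hsu hX
  have htrXdisj := trX_disj hLdisj hLE hEdisj hCdisj
  have htrE : ∀ m j, j ∈ C m → ∀ x ∈ E j, x ∈ trX L E C n m := by
    intro m j hj x hx
    exact Set.mem_union_right _ (Set.mem_biUnion hj hx)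
  have htrL : ∀ i ≤ n, ∀ x ∈ L i, x ∈ trX L E C n i := by
    intro i hi x hx
    exact Set.mem_union_left _ (by rw [if_pos hi]; exact hx)
  have hune : ∀ B ∈ u, B.Nonempty := hu.1
  have hudisj : ∀ b ∈ u, ∀ c' ∈ u, b ≠ c' → Disjoint b c' := hu.2.1
  have hucov : ⋃₀ u = {x | x < nu} := hu.2.2
  have huIio : ∀ B ∈ u, ∀ x ∈ B, x < nu := by
    intro B hB x hx
    have : x ∈ ⋃₀ u := Set.mem_sUnion.mpr ⟨B, hB, hx⟩
    rw [hucov] at this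
    exact this
  have huB : ∀ B ∈ u, ∃ S ⊆ bigX L E C n, B = ⋃₀ S ∩ {x | x < nu + 1} :=
    fun B hB => hX B (Set.mem_insert_of_mem _ hB)
  have hnsnu : ns ≤ nu := by
    by_contra h
    push_neg at h
    have h1 : nu ∈ ⋃₀ s := by rw [hs.2.2]; exact h
    obtain ⟨b, hb, hnub⟩ := h1
    obtain ⟨d, hd, hbd⟩ := hsu b hb
    have h2 : nu ∈ d := by rw [hbd] at hnub; exact hnub.1
    exact absurd (huIio d hd nu h2) (by omega)
  have hassign : ∀ B ∈ u, ∀ x ∈ B, ∃ T ∈ bigX L E C n, x ∈ T ∧ T ∩ {y | y < nu + 1} ⊆ B := by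
    intro B hB x hx
    obtain ⟨S, hS, hBeq⟩ := huB B hB
    have hx' : x ∈ ⋃₀ S ∩ {x | x < nu + 1} := by rw [← hBeq]; exact hx
    obtain ⟨T, hTS, hxT⟩ := Set.mem_sUnion.mp hx'.1
    refine ⟨T, hS hTS, hxT, ?_⟩
    intro y hy
    rw [hBeq]
    exact ⟨Set.mem_sUnion.mpr ⟨T, hTS, hy.1⟩, hy.2⟩
  -- letter blocks of u
  have hd0 : ∀ i : ℕ, ∃ d, i ≤ n → d ∈ u ∧ L i ∩ {x | x < ns} = d ∩ {x | x < ns} := by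
    intro i
    by_cases hi : i ≤ n
    · obtain ⟨d, hd, hbd⟩ := hsu _ (hLs i hi)
      exact ⟨d, fun _ => ⟨hd, hbd⟩⟩
    · exact ⟨∅, fun h => absurd h hi⟩
  choose d hd using hd0
  have hdmem : ∀ i ≤ n, d i ∈ u := fun i hi => (hd i hi).1
  have hdtr : ∀ i ≤ n, L i ∩ {x | x < ns} = d i ∩ {x | x < ns} := fun i hi => (hd i hi).2
  have hyi : ∀ i ≤ n, ∃ y, y ∈ L i ∧ y < ns ∧ y ∈ d i ∧ y ∈ trX L E C n i := by
    intro i hi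
    obtain ⟨y, hy⟩ := hs.1 _ (hLs i hi)
    have hyd : y ∈ d i := by
      have : y ∈ d i ∩ {x | x < ns} := by rw [← hdtr i hi]; exact hy
      exact this.1
    exact ⟨y, hy.1, hy.2, hyd, htrL i hi y hy.1⟩
  have hdinj : ∀ i ≤ n, ∀ i' ≤ n, d i = d i' → i = i' := by
    intro i hi i' hi' hdd
    exact hLinj i hi i' hi' (by rw [hdtr i hi, hdtr i' hi', hdd])
  have hblockOf : ∀ B ∈ u, ∀ z ∈ B, ∀ m, z ∈ trX L E C n m →
      trX L E C n m ∩ {y | y < nu + 1} ⊆ B := by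
    intro B hB z hz m hzm
    obtain ⟨T, hTX, hzT, hTsub⟩ := hassign B hB z hz
    obtain ⟨m', rfl⟩ := hTX
    have hmm : m' = m := by
      by_contra hne
      exact Set.disjoint_left.mp (htrXdisj m' m hne) hzT hzm
    rw [hmm] at hTsub
    exact hTsub
  have htrletter : ∀ i ≤ n, trX L E C n i ∩ {y | y < nu + 1} ⊆ d i := by
    intro i hi
    obtain ⟨y, _, _, hyd, hytr⟩ := hyi i hi
    exact hblockOf (d i) (hdmem i hi) y hyd i hytr
  -- the {nu} block made of an E-only block of X
  obtain ⟨S0, hS0X, hnueq⟩ := hX {nu} (Set.mem_insert _ _)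
  have hnumem : nu ∈ ⋃₀ S0 ∩ {x | x < nu + 1} := by
    rw [← hnueq]; rfl
  obtain ⟨T0, hT0S, hnuT0⟩ := Set.mem_sUnion.mp hnumem.1
  have hT0tr : ∀ x ∈ T0, x < nu + 1 → x = nu := by
    intro x hx hxlt
    have : x ∈ ({nu} : Set ℕ) := by
      rw [hnueq]; exact ⟨Set.mem_sUnion.mpr ⟨T0, hT0S, hx⟩, hxlt⟩
    exact this
  obtain ⟨iT, hiTeq⟩ := hS0X hT0S
  have hiTn : ¬ iT ≤ n := by
    intro hiTle
    obtain ⟨y, _, hyns, _, hytr⟩ := hyi iT hiTle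
    have : y = nu := hT0tr y (by rw [← hiTeq]; exact hytr) (by omega)
    omega
  have hT0E : T0 = ⋃ j ∈ C iT, E j := by
    rw [← hiTeq, trX, if_neg hiTn, Set.empty_union]
  obtain ⟨nw, hnwC, hnunw⟩ := Set.mem_iUnion₂.mp (by rw [hT0E] at hnuT0; exact hnuT0)
  have hjnu : sInf (E nw) = nu := by
    have h1 : sInf (E nw) ≤ nu := Nat.sInf_le hnunw
    have h2 : sInf (E nw) ∈ T0 := by
      rw [hT0E]; exact Set.mem_iUnion₂.mpr ⟨nw, hnwC, Nat.sInf_mem (hEne nw)⟩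
    exact hT0tr _ h2 (by omega)
  have hjlt : ∀ j, j < nw ↔ sInf (E j) < nu := by
    intro j
    rw [← hjnu]
    constructor
    · exact fun h => hEmono h
    · intro h
      by_contra hle
      push_neg at hle
      have := hEmono.le_iff_le.mpr hle
      omega
  have hCiTnw : ∀ j ∈ C iT, ¬ j < nw := by
    intro j hj hlt
    have h1 : sInf (E j) < nu := (hjlt j).mp hlt
    have h2 : sInf (E j) ∈ T0 := by
      rw [hT0E]; exact Set.mem_iUnion₂.mpr ⟨j, hj, Nat.sInf_mem (hEne j)⟩
    have := hT0tr _ h2 (by omega)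
    omega
  have hCilt : ∀ i ≤ n, sInf (C i) < nw := by
    intro i hi
    have h0 : n < iT := by omega
    have h1 : sInf (C iT) ≤ nw := Nat.sInf_le hnwC
    have h2 : sInf (C n) < sInf (C iT) := hCmono h0
    have h3 : sInf (C i) ≤ sInf (C n) := hCmono.monotone hi
    omega
  -- cells
  have hcellmem : ∀ B j, j ∈ cellOf E nw B ↔ j < nw ∧ sInf (E j) ∈ B := by
    intro B j; rfl
  have hcell_letter : ∀ i ≤ n, ∀ j ∈ C i, j < nw → j ∈ cellOf E nw (d i) := by
    intro i hi j hj hjlt'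
    refine (hcellmem _ _).mpr ⟨hjlt', ?_⟩
    have h1 : sInf (E j) ∈ trX L E C n i := htrE i j hj _ (Nat.sInf_mem (hEne j))
    have h2 : sInf (E j) < nu := (hjlt j).mp hjlt'
    exact htrletter i hi ⟨h1, show sInf (E j) < nu + 1 by omega⟩
  have hcell_case : ∀ B ∈ u, ∀ j ∈ cellOf E nw B, ∀ m, j ∈ C m → m ≤ n → B = d m := by
    intro B hB j hj m hjm hm
    have h1 : sInf (E j) ∈ trX L E C n m := htrE m j hjm _ (Nat.sInf_mem (hEne j))
    have h2 : sInf (E j) < nu := (hjlt j).mp hj.1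
    have h3 : sInf (E j) ∈ d m := htrletter m hm ⟨h1, show sInf (E j) < nu + 1 by omega⟩
    exact uniq hudisj hB (hdmem m hm) hj.2 h3
  have hletter_min : ∀ i ≤ n, sInf (cellOf E nw (d i)) = sInf (C i) := by
    intro i hi
    have hj0 : sInf (C i) ∈ cellOf E nw (d i) :=
      hcell_letter i hi _ (Nat.sInf_mem (hCne i)) (hCilt i hi)
    have hlb : ∀ j ∈ cellOf E nw (d i), sInf (C i) ≤ j := by
      intro j hj
      obtain ⟨m, hjm⟩ := hCcov j
      by_cases hm : m ≤ n
      · have h1 := hcell_case (d i) (hdmem i hi) j hj m hjm hm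
        have him : i = m := hdinj i hi m hm h1
        rw [him]
        exact Nat.sInf_le hjm
      · have h2 : sInf (C i) < sInf (C m) := hCmono (by omega)
        have h3 : sInf (C m) ≤ j := Nat.sInf_le hjm
        omega
    exact le_antisymm (Nat.sInf_le hj0) (le_csInf ⟨_, hj0⟩ hlb)
  have hparam_min : ∀ B ∈ u, (∀ i ≤ n, B ≠ d i) → ∀ j ∈ cellOf E nw B, sInf (C n) < j := by
    intro B hB hpar j hj
    obtain ⟨m, hjm⟩ := hCcov j
    by_cases hm : m ≤ n
    · exact absurd (hcell_case B hB j hj m hjm hm) (hpar m hm)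
    · have h2 : sInf (C n) < sInf (C m) := hCmono (by omega)
      have h3 : sInf (C m) ≤ j := Nat.sInf_le hjm
      omega
  have hcellne : ∀ B ∈ u, (cellOf E nw B).Nonempty := by
    intro B hB
    by_cases hbl : ∃ i ≤ n, B = d i
    · obtain ⟨i, hi, hBd⟩ := hbl
      rw [hBd]
      exact ⟨_, hcell_letter i hi _ (Nat.sInf_mem (hCne i)) (hCilt i hi)⟩
    · push_neg at hbl
      obtain ⟨x, hx⟩ := hune B hB
      obtain ⟨T, hTX, hxT, hTsub⟩ := hassign B hB x hx
      obtain ⟨m, rfl⟩ := hTX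
      by_cases hm : m ≤ n
      · exfalso
        obtain ⟨y, _, hyns, hyd, hytr⟩ := hyi m hm
        have hyB : y ∈ B := hTsub ⟨hytr, show y < nu + 1 by omega⟩
        exact hbl m hm (uniq hudisj hB (hdmem m hm) hyB hyd)
      · have hxE : x ∈ ⋃ j ∈ C m, E j := by
          rcases (Set.mem_union _ _ _).mp hxT with h | h
          · rw [if_neg hm] at h; exact h.elim
          · exact h
        obtain ⟨j1, hj1C, hxj1⟩ := Set.mem_iUnion₂.mp hxE
        have hxnu : x < nu := huIio B hB x hx
        have h1 : sInf (E j1) ≤ x := Nat.sInf_le hxj1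
        have hj1w : j1 < nw := (hjlt j1).mpr (by omega)
        have h2 : sInf (E j1) ∈ trX L E C n m := htrE m j1 hj1C _ (Nat.sInf_mem (hEne j1))
        exact ⟨j1, (hcellmem _ _).mpr ⟨hj1w, hTsub ⟨h2, show sInf (E j1) < nu + 1 by omega⟩⟩⟩
  have hwseg : IsSegOf (cellOf E nw '' u) nw := by
    refine ⟨?_, ?_, ?_⟩
    · rintro b ⟨B, hB, rfl⟩
      exact hcellne B hB
    · rintro b ⟨B, hB, rfl⟩ b' ⟨B', hB', rfl⟩ hne
      rw [Set.disjoint_left]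
      intro j hj hj'
      exact hne (congrArg (cellOf E nw) (uniq hudisj hB hB' hj.2 hj'.2))
    · ext j
      constructor
      · rintro ⟨b, ⟨B, hB, rfl⟩, hj⟩
        exact hj.1
      · intro hj
        have h1 : sInf (E j) ∈ ⋃₀ u := by
          rw [hucov]; exact (hjlt j).mp hj
        obtain ⟨B, hB, hjB⟩ := h1
        exact ⟨cellOf E nw B, ⟨B, hB, rfl⟩, (hcellmem _ _).mpr ⟨hj, hjB⟩⟩
  have hcellinj : Set.InjOn (cellOf E nw) u := by
    intro B hB B' hB' heq
    by_contra hne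
    obtain ⟨j, hj⟩ := hcellne B hB
    have hj' : j ∈ cellOf E nw B' := by rw [← heq]; exact hj
    exact hne (uniq hudisj hB hB' hj.2 hj'.2)
  have hwcard : (cellOf E nw '' u).ncard = n + k + 1 := by
    rw [Set.ncard_image_of_injOn hcellinj, hucard]
  have hwco : SegCoarser (segExt (cellOf E nw '' u) nw) (nw + 1) Xb := by
    rintro b hb
    rcases Set.mem_insert_iff.mp hb with rfl | ⟨B, hB, rfl⟩
    · refine ⟨{C iT}, by simpa using hCmem iT, ?_⟩
      rw [Set.sUnion_singleton]
      ext x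
      simp only [Set.mem_inter_iff, Set.mem_setOf_eq, Set.mem_singleton_iff]
      constructor
      · rintro rfl
        exact ⟨hnwC, by omega⟩
      · rintro ⟨hxC, hxlt⟩
        by_contra hne
        exact hCiTnw x hxC (by omega)
    · refine ⟨{e ∈ Xb | ∃ j ∈ e, j < nw ∧ sInf (E j) ∈ B}, fun e he => he.1, ?_⟩
      ext x
      constructor
      · intro hx
        obtain ⟨m, hxm⟩ := hCcov x
        exact ⟨Set.mem_sUnion.mpr ⟨C m, ⟨hCmem m, x, hxm, hx.1, hx.2⟩, hxm⟩,
          by have := hx.1; simp only [Set.mem_setOf_eq]; omega⟩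
      · rintro ⟨hxU, hxlt⟩
        obtain ⟨e, ⟨heXb, j, hje, hjw, hjB⟩, hxe⟩ := Set.mem_sUnion.mp hxU
        obtain ⟨m, hm⟩ := hCsurj e heXb
        rw [← hm] at hxe hje
        have hxnw : x < nw := by
          have hxle : x < nw + 1 := hxlt
          rcases Nat.lt_or_ge x nw with h | h
          · exact h
          · exfalso
            have hxeq : x = nw := by omega
            have hCmiT : C m = C iT := by
              by_contra hne
              exact Set.disjoint_left.mp (hXbdisj _ (hCmem m) _ (hCmem iT)
                hne) (hxeq ▸ hxe) hnwC
            rw [hCmiT] at hje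
            exact hCiTnw j hje hjw
        refine (hcellmem _ _).mpr ⟨hxnw, ?_⟩
        have hzm : sInf (E j) ∈ trX L E C n m := htrE m j hje _ (Nat.sInf_mem (hEne j))
        have hsub := hblockOf B hB _ hjB m hzm
        have hx2 : sInf (E x) ∈ trX L E C n m := htrE m x hxe _ (Nat.sInf_mem (hEne x))
        have hx3 : sInf (E x) < nu := (hjlt x).mp hxnw
        exact hsub ⟨hx2, show sInf (E x) < nu + 1 by omega⟩
  have hc := hmono _ nw hwseg hwcard hwco
  -- decoding
  have hufin : u.Finite := by
    by_contra h
    have := Set.Infinite.ncard h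
    omega
  have hwfin : ((sInf '' (cellOf E nw '' u)) : Set ℕ).Finite := (hufin.image _).image _
  have hIio_ncard : ∀ m : ℕ, (Set.Iio m).ncard = m := by
    intro m
    rw [← Finset.coe_Iio, Set.ncard_coe_finset, Nat.card_Iio]
  have hrnk_letter : ∀ i ≤ n, rnk (cellOf E nw '' u) (cellOf E nw (d i)) = i := by
    intro i hi
    have hseteq : (sInf '' (cellOf E nw '' u)) ∩ Set.Iio (sInf (cellOf E nw (d i)))
        = (fun m => sInf (C m)) '' Set.Iio i := by
      rw [hletter_min i hi]
      ext y
      constructor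
      · rintro ⟨⟨b, ⟨B, hB, rfl⟩, rfl⟩, hylt⟩
        rw [Set.mem_Iio] at hylt
        by_cases hbl : ∃ m ≤ n, B = d m
        · obtain ⟨m, hm, hBd⟩ := hbl
          rw [hBd, hletter_min m hm] at hylt ⊢
          exact ⟨m, Set.mem_Iio.mpr ((hCmono.lt_iff_lt).mp hylt), rfl⟩
        · push_neg at hbl
          exfalso
          have h1 : sInf (cellOf E nw B) ∈ cellOf E nw B := Nat.sInf_mem (hcellne B hB)
          have h2 := hparam_min B hB hbl _ h1
          have h3 : sInf (C i) ≤ sInf (C n) := hCmono.monotone hi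
          omega
      · rintro ⟨m, hmi, rfl⟩
        rw [Set.mem_Iio] at hmi
        have hm : m ≤ n := by omega
        exact ⟨⟨cellOf E nw (d m), ⟨d m, hdmem m hm, rfl⟩, hletter_min m hm⟩,
          Set.mem_Iio.mpr (hCmono hmi)⟩
    rw [rnk, hseteq, Set.ncard_image_of_injOn (hCmono.injective.injOn), hIio_ncard]
  have hrnk_param : ∀ B ∈ u, (∀ i ≤ n, B ≠ d i) →
      ¬ rnk (cellOf E nw '' u) (cellOf E nw B) ≤ n := by
    intro B hB hpar hle
    have hsub : (fun m => sInf (C m)) '' Set.Iio (n + 1) ⊆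
        (sInf '' (cellOf E nw '' u)) ∩ Set.Iio (sInf (cellOf E nw B)) := by
      rintro y ⟨m, hm, rfl⟩
      rw [Set.mem_Iio] at hm
      have hm' : m ≤ n := by omega
      refine ⟨⟨cellOf E nw (d m), ⟨d m, hdmem m hm', rfl⟩, hletter_min m hm'⟩, ?_⟩
      have h1 : sInf (cellOf E nw B) ∈ cellOf E nw B := Nat.sInf_mem (hcellne B hB)
      have h2 := hparam_min B hB hpar _ h1
      have h3 : sInf (C m) ≤ sInf (C n) := hCmono.monotone hm'
      exact (show sInf (C m) < sInf (cellOf E nw B) by omega)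
    have hcard2 : n + 1 ≤ rnk (cellOf E nw '' u) (cellOf E nw B) := by
      have e1 : ((fun m => sInf (C m)) '' Set.Iio (n + 1)).ncard = n + 1 := by
        rw [Set.ncard_image_of_injOn (hCmono.injective.injOn), hIio_ncard]
      rw [rnk, ← e1]
      exact Set.ncard_le_ncard hsub (hwfin.inter_of_left _)
    omega
  have hEcell : ∀ B ∈ u, (⋃ j ∈ cellOf E nw B, E j) ∩ Set.Iio nu ⊆ B := by
    rintro B hB x ⟨hxU, hxlt⟩
    rw [Set.mem_Iio] at hxlt
    obtain ⟨j, hj, hxj⟩ := Set.mem_iUnion₂.mp hxU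
    obtain ⟨m, hjm⟩ := hCcov j
    have hzm : sInf (E j) ∈ trX L E C n m := htrE m j hjm _ (Nat.sInf_mem (hEne j))
    have hsub := hblockOf B hB _ hj.2 m hzm
    have hxm : x ∈ trX L E C n m := htrE m j hjm x hxj
    exact hsub ⟨hxm, show x < nu + 1 by omega⟩
  have hEpart : ∀ B ∈ u, ∀ x ∈ B, ∀ m, ¬ m ≤ n → x ∈ trX L E C n m →
      trX L E C n m ∩ {y | y < nu + 1} ⊆ B → x ∈ ⋃ j ∈ cellOf E nw B, E j := by
    intro B hB x hx m hm hxT hTsub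
    have hxE : x ∈ ⋃ j ∈ C m, E j := by
      rcases (Set.mem_union _ _ _).mp hxT with h | h
      · rw [if_neg hm] at h; exact h.elim
      · exact h
    obtain ⟨j, hjm, hxj⟩ := Set.mem_iUnion₂.mp hxE
    have hxnu : x < nu := huIio B hB x hx
    have h1 : sInf (E j) ≤ x := Nat.sInf_le hxj
    have hjw : j < nw := (hjlt j).mpr (by omega)
    have hsB : sInf (E j) ∈ B := hTsub ⟨htrE m j hjm _ (Nat.sInf_mem (hEne j)), show sInf (E j) < nu + 1 by omega⟩
    exact Set.mem_iUnion₂.mpr ⟨j, (hcellmem _ _).mpr ⟨hjw, hsB⟩, hxj⟩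
  have hdec : ∀ B ∈ u, decBlock L n E (cellOf E nw '' u) nu (cellOf E nw B) = B := by
    intro B hB
    by_cases hbl : ∃ i ≤ n, B = d i
    · obtain ⟨i, hi, hBd⟩ := hbl
      have hr : rnk (cellOf E nw '' u) (cellOf E nw B) = i := by
        rw [hBd]; exact hrnk_letter i hi
      rw [decBlock, hr, if_pos hi]
      ext x
      constructor
      · rintro ⟨hx, hxlt⟩
        rw [Set.mem_Iio] at hxlt
        rcases (Set.mem_union _ _ _).mp hx with hxE | hxL
        · exact hEcell B hB ⟨hxE, Set.mem_Iio.mpr hxlt⟩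
        · have hxtr : x ∈ trX L E C n i := htrL i hi x hxL
          rw [hBd]
          exact htrletter i hi ⟨hxtr, show x < nu + 1 by omega⟩
      · intro hx
        have hxlt : x < nu := huIio B hB x hx
        refine ⟨?_, Set.mem_Iio.mpr hxlt⟩
        obtain ⟨T, hTX, hxT, hTsub⟩ := hassign B hB x hx
        obtain ⟨m, rfl⟩ := hTX
        by_cases hm : m ≤ n
        · obtain ⟨y, _, hyns, hyd, hytr⟩ := hyi m hm
          have hyB : y ∈ B := hTsub ⟨hytr, show y < nu + 1 by omega⟩
          have hBdm : B = d m := uniq hudisj hB (hdmem m hm) hyB hyd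
          have him : i = m := hdinj i hi m hm (by rw [← hBd, hBdm])
          rcases (Set.mem_union _ _ _).mp hxT with hxL | hxE
          · rw [if_pos hm] at hxL
            right
            rw [him]
            exact hxL
          · left
            obtain ⟨j, hjm, hxj⟩ := Set.mem_iUnion₂.mp hxE
            have h1 : sInf (E j) ≤ x := Nat.sInf_le hxj
            have hjw : j < nw := (hjlt j).mpr (by omega)
            have hsB : sInf (E j) ∈ B := hTsub ⟨htrE m j hjm _ (Nat.sInf_mem (hEne j)), show sInf (E j) < nu + 1 by omega⟩
            exact Set.mem_iUnion₂.mpr ⟨j, (hcellmem _ _).mpr ⟨hjw, hsB⟩, hxj⟩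
        · exact Or.inl (hEpart B hB x hx m hm hxT hTsub)
    · push_neg at hbl
      have hr := hrnk_param B hB hbl
      rw [decBlock, if_neg hr, Set.union_empty]
      ext x
      constructor
      · rintro ⟨hx, hxlt⟩
        exact hEcell B hB ⟨hx, hxlt⟩
      · intro hx
        have hxlt : x < nu := huIio B hB x hx
        refine ⟨?_, Set.mem_Iio.mpr hxlt⟩
        obtain ⟨T, hTX, hxT, hTsub⟩ := hassign B hB x hx
        obtain ⟨m, rfl⟩ := hTX
        by_cases hm : m ≤ n
        · exfalso
          obtain ⟨y, _, hyns, hyd, hytr⟩ := hyi m hm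
          have hyB : y ∈ B := hTsub ⟨hytr, show y < nu + 1 by omega⟩
          exact hbl m hm (uniq hudisj hB (hdmem m hm) hyB hyd)
        · exact hEpart B hB x hx m hm hxT hTsub
  have hfinal : decSeg L n E (cellOf E nw '' u) nw = u := by
    rw [decSeg, hjnu, Set.image_image]
    ext b
    constructor
    · rintro ⟨B, hB, rfl⟩
      show decBlock L n E (cellOf E nw '' u) nu (cellOf E nw B) ∈ u
      rw [hdec B hB]
      exact hB
    · intro hb
      exact ⟨b, hb, hdec b hb⟩
  rw [hfinal, hjnu] at hc
  exact hc

lemma main18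
    (DRT : ∀ (m r : ℕ) (π : Set (Set ℕ) → ℕ → Fin (r + 1)) (Z : Set (Set ℕ)),
      IsPartition Z → Z.Infinite →
      ∃ X, IsPartition X ∧ X.Infinite ∧ Coarser X Z ∧
        ∃ c : Fin (r + 1), ∀ u nu, IsSegOf u nu → u.ncard = m + 1 →
          SegCoarser (segExt u nu) (nu + 1) X → π u nu = c)
    (r n k : ℕ) (π : Set (Set ℕ) → ℕ → Fin (r + 1))
    (s : Set (Set ℕ)) (ns : ℕ) (Y : Set (Set ℕ))
    (hs : IsSegOf s ns) (hcard : s.ncard = n + 1)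
    (hY : IsPartition Y) (hYi : Y.Infinite) (hsY : SegCoarser s ns Y) :
    ∃ X, IsPartition X ∧ X.Infinite ∧ InitSeg s ns X ∧ Coarser X Y ∧
      ∃ c : Fin (r + 1), ∀ u nu, IsSegOf u nu → u.ncard = n + k + 1 →
        InitSeg s ns u → SegCoarser (segExt u nu) (nu + 1) X → π u nu = c := by
  -- blocks of s are inside {x | x < ns}
  have hssub : ∀ b ∈ s, b ⊆ {x | x < ns} := by
    intro b hb
    rw [← hs.2.2]
    exact Set.subset_sUnion_of_mem hb
  -- s is finite; enumerate its blocks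
  have hsfin : s.Finite := by
    have hinj : Set.InjOn sInf s := fun a ha b hb hab =>
      uniq hs.2.1 ha hb (Nat.sInf_mem (hs.1 a ha)) (hab ▸ Nat.sInf_mem (hs.1 b hb))
    refine Set.Finite.of_finite_image (Set.Finite.subset (Set.finite_Iio ns) ?_) hinj
    rintro y ⟨b, hb, rfl⟩
    exact hssub b hb (Nat.sInf_mem (hs.1 b hb))
  have hscard : Nat.card ↥s = n + 1 := by rw [Nat.card_coe_set_eq, hcard]
  haveI : Finite ↥s := hsfin.to_subtype
  let e : ↥s ≃ Fin (n + 1) := (Finite.equivFin ↥s).trans (finCongr hscard)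
  let bL : ℕ → Set ℕ := fun i => if h : i ≤ n then (e.symm ⟨i, by omega⟩ : Set ℕ) else ∅
  have hbLmem : ∀ i ≤ n, bL i ∈ s := by
    intro i hi
    simp only [bL, dif_pos hi]
    exact (e.symm ⟨i, by omega⟩).2
  have hbLinj : ∀ i ≤ n, ∀ i' ≤ n, bL i = bL i' → i = i' := by
    intro i hi i' hi' hii
    simp only [bL, dif_pos hi, dif_pos hi'] at hii
    have h1 : e.symm ⟨i, by omega⟩ = e.symm ⟨i', by omega⟩ := Subtype.ext hii
    have h2 := congrArg e h1
    simp only [Equiv.apply_symm_apply] at h2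
    exact congrArg Fin.val h2
  have hbLsurj : ∀ b ∈ s, ∃ i ≤ n, bL i = b := by
    intro b hb
    refine ⟨(e ⟨b, hb⟩).1, by omega, ?_⟩
    simp only [bL, dif_pos (show (e ⟨b, hb⟩).1 ≤ n by omega)]
    have : (⟨(e ⟨b, hb⟩).1, by omega⟩ : Fin (n + 1)) = e ⟨b, hb⟩ := by
      apply Fin.ext
      rfl
    rw [this, Equiv.symm_apply_apply]
  -- every Y-block meeting {x < ns} has its trace inside a unique block of s
  have htrsub : ∀ dd ∈ Y, ∀ b ∈ s, ∀ y, y ∈ dd → y ∈ b → dd ∩ {x | x < ns} ⊆ b := by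
    intro dd hdd b hb y hydd hyb
    obtain ⟨S, hSY, hbeq⟩ := hsY b hb
    have hy' : y ∈ ⋃₀ S ∩ {x | x < ns} := by rw [← hbeq]; exact hyb
    obtain ⟨dd', hddS, hydd'⟩ := Set.mem_sUnion.mp hy'.1
    have : dd' = dd := uniq hY.2.1 (hSY hddS) hdd hydd' hydd
    rw [← this]
    intro z hz
    rw [hbeq]
    exact ⟨Set.mem_sUnion.mpr ⟨dd', hddS, hz.1⟩, hz.2⟩
  -- letter blocks
  let L : ℕ → Set ℕ := fun i =>
    ⋃₀ {dd ∈ Y | (dd ∩ {x | x < ns}).Nonempty ∧ dd ∩ {x | x < ns} ⊆ bL i}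
  have hDtr : ∀ b ∈ s,
      (⋃₀ {dd ∈ Y | (dd ∩ {x | x < ns}).Nonempty ∧ dd ∩ {x | x < ns} ⊆ b}) ∩ {x | x < ns}
        = b := by
    intro b hb
    ext x
    constructor
    · rintro ⟨⟨dd, ⟨hddY, hne, hsub⟩, hxdd⟩, hxns⟩
      exact hsub ⟨hxdd, hxns⟩
    · intro hxb
      have hxns : x ∈ {x | x < ns} := hssub b hb hxb
      obtain ⟨S, hSY, hbeq⟩ := hsY b hb
      have hx' : x ∈ ⋃₀ S ∩ {x | x < ns} := by rw [← hbeq]; exact hxb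
      obtain ⟨dd, hddS, hxdd⟩ := Set.mem_sUnion.mp hx'.1
      exact ⟨⟨dd, ⟨hSY hddS, ⟨x, hxdd, hxns⟩,
        htrsub dd (hSY hddS) b hb x hxdd hxb⟩, hxdd⟩, hxns⟩
  have hLtr : ∀ i ≤ n, L i ∩ {x | x < ns} = bL i := fun i hi => hDtr _ (hbLmem i hi)
  have hLs : ∀ i ≤ n, L i ∩ {x | x < ns} ∈ s := fun i hi => (hLtr i hi) ▸ hbLmem i hi
  have hLinj : ∀ i ≤ n, ∀ i' ≤ n, L i ∩ {x | x < ns} = L i' ∩ {x | x < ns} → i = i' := by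
    intro i hi i' hi' h
    rw [hLtr i hi, hLtr i' hi'] at h
    exact hbLinj i hi i' hi' h
  have hLcov : ∀ b ∈ s, ∃ i ≤ n, L i ∩ {x | x < ns} = b := by
    intro b hb
    obtain ⟨i, hi, hbi⟩ := hbLsurj b hb
    exact ⟨i, hi, by rw [hLtr i hi, hbi]⟩
  have hLdisj : ∀ i ≤ n, ∀ i' ≤ n, i ≠ i' → Disjoint (L i) (L i') := by
    intro i hi i' hi' hne
    rw [Set.disjoint_left]
    rintro x ⟨dd, ⟨hddY, hddne, hddsub⟩, hxdd⟩ ⟨dd', ⟨hddY', hddne', hddsub'⟩, hxdd'⟩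
    have : dd = dd' := uniq hY.2.1 hddY hddY' hxdd hxdd'
    subst this
    obtain ⟨y, hy⟩ := hddne
    have h1 : y ∈ bL i := hddsub hy
    have h2 : y ∈ bL i' := hddsub' hy
    exact hne (hbLinj i hi i' hi'
      (uniq hs.2.1 (hbLmem i hi) (hbLmem i' hi') h1 h2))
  -- the blocks of Y avoiding {x < ns}
  have hMEfin : {dd ∈ Y | (dd ∩ {x | x < ns}).Nonempty}.Finite := by
    have hinj : Set.InjOn (fun dd => sInf (dd ∩ {x | x < ns}))
        {dd ∈ Y | (dd ∩ {x | x < ns}).Nonempty} := by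
      rintro a ⟨haY, hane⟩ b ⟨hbY, hbne⟩ hab
      have h1 := Nat.sInf_mem hane
      have h2 := Nat.sInf_mem hbne
      simp only at hab
      rw [hab] at h1
      exact uniq hY.2.1 haY hbY h1.1 h2.1
    refine Set.Finite.of_finite_image (Set.Finite.subset (Set.finite_Iio ns) ?_) hinj
    rintro y ⟨dd, ⟨hddY, hddne⟩, rfl⟩
    exact (Nat.sInf_mem hddne).2
  have hEsetinf : {dd ∈ Y | dd ∩ {x | x < ns} = ∅}.Infinite := by
    have heq : Y \ {dd ∈ Y | (dd ∩ {x | x < ns}).Nonempty}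
        = {dd ∈ Y | dd ∩ {x | x < ns} = ∅} := by
      ext dd
      constructor
      · rintro ⟨hddY, hnot⟩
        refine ⟨hddY, ?_⟩
        by_contra h
        exact hnot ⟨hddY, Set.nonempty_iff_ne_empty.mpr h⟩
      · rintro ⟨hddY, hemp⟩
        exact ⟨hddY, fun h => (Set.nonempty_iff_ne_empty.mp h.2) hemp⟩
    rw [← heq]
    exact hYi.diff hMEfin
  obtain ⟨hEmem, hEmono, hEsurj⟩ := blkEnum_spec _
    (fun d hd => hY.1 d hd.1)
    (fun a ha b hb hab => hY.2.1 a ha.1 b hb.1 hab) hEsetinf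
  set E : ℕ → Set ℕ := blkEnum {dd ∈ Y | dd ∩ {x | x < ns} = ∅} with hEdef
  have hEne : ∀ j, (E j).Nonempty := fun j => hY.1 _ (hEmem j).1
  have hEY : ∀ j, E j ∈ Y := fun j => (hEmem j).1
  have hEtr : ∀ j, E j ∩ {x | x < ns} = ∅ := fun j => (hEmem j).2
  have hEdisj : ∀ j j', j ≠ j' → Disjoint (E j) (E j') := by
    intro j j' hne
    refine hY.2.1 _ (hEY j) _ (hEY j') ?_
    intro h
    exact hne (hEmono.injective (by simp only [h]))
  have hLE : ∀ i ≤ n, ∀ j, Disjoint (L i) (E j) := by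
    intro i hi j
    rw [Set.disjoint_left]
    rintro x ⟨dd, ⟨hddY, hddne, hddsub⟩, hxdd⟩ hxE
    have : dd = E j := uniq hY.2.1 hddY (hEY j) hxdd hxE
    rw [this] at hddne
    obtain ⟨y, hy⟩ := hddne
    rw [hEtr j] at hy
    exact hy
  -- apply DRT on the index space to the singleton partition
  have hZsP : IsPartition (Set.range (fun m => ({m} : Set ℕ))) := by
    refine ⟨?_, ?_, ?_⟩
    · rintro b ⟨m, rfl⟩; exact ⟨m, rfl⟩
    · rintro b ⟨m, rfl⟩ b' ⟨m', rfl⟩ hne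
      rw [Set.disjoint_left]
      rintro x rfl h
      exact hne (by rw [h])
    · ext x
      exact ⟨fun _ => trivial, fun _ => ⟨{x}, ⟨x, rfl⟩, rfl⟩⟩
  have hZsInf : (Set.range (fun m => ({m} : Set ℕ))).Infinite := by
    apply Set.infinite_range_of_injective
    intro a b h
    exact Set.singleton_eq_singleton_iff.mp h
  obtain ⟨Xb, hXbP, hXbInf, -, c, hmono⟩ :=
    DRT (n + k) r (fun w nbar => π (decSeg L n E w nbar) (sInf (E nbar))) _ hZsP hZsInf
  obtain ⟨hCmem, hCmono, hCsurj⟩ := blkEnum_spec Xb hXbP.1 hXbP.2.1 hXbInf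
  set C : ℕ → Set ℕ := blkEnum Xb with hCdef
  have hCne : ∀ i, (C i).Nonempty := fun i => hXbP.1 _ (hCmem i)
  have hCdisj : ∀ i i', i ≠ i' → Disjoint (C i) (C i') := by
    intro i i' hne
    refine hXbP.2.1 _ (hCmem i) _ (hCmem i') ?_
    intro h
    exact hne (hCmono.injective (by simp only [h]))
  have hCcov : ∀ j : ℕ, ∃ i, j ∈ C i := by
    intro j
    have : j ∈ ⋃₀ Xb := by rw [hXbP.2.2]; trivial
    obtain ⟨dd, hdd, hjdd⟩ := this
    obtain ⟨i, hi⟩ := hCsurj dd hdd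
    exact ⟨i, by rw [hi]; exact hjdd⟩
  have htrXdisj := trX_disj (L := L) (E := E) (C := C) (n := n) hLdisj hLE hEdisj hCdisj
  -- structural facts about X = bigX L E C n
  have htrne : ∀ i, (trX L E C n i).Nonempty := by
    intro i
    obtain ⟨j, hj⟩ := hCne i
    obtain ⟨x, hx⟩ := hEne j
    exact ⟨x, Set.mem_union_right _ (Set.mem_biUnion hj hx)⟩
  have hXP : IsPartition (bigX L E C n) := by
    refine ⟨?_, ?_, ?_⟩
    · rintro b ⟨i, rfl⟩
      exact htrne i
    · rintro b ⟨i, rfl⟩ b' ⟨i', rfl⟩ hne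
      exact htrXdisj i i' (fun h => hne (by rw [h]))
    · ext x
      refine ⟨fun _ => trivial, fun _ => ?_⟩
      have hx : x ∈ ⋃₀ Y := by rw [hY.2.2]; trivial
      obtain ⟨dd, hddY, hxdd⟩ := hx
      by_cases hdn : (dd ∩ {x | x < ns}).Nonempty
      · obtain ⟨y, hy⟩ := hdn
        have hyns : y ∈ ⋃₀ s := by rw [hs.2.2]; exact hy.2
        obtain ⟨b, hb, hyb⟩ := hyns
        obtain ⟨i, hi, hbi⟩ := hbLsurj b hb
        have hsub : dd ∩ {x | x < ns} ⊆ bL i := by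
          rw [hbi]
          exact htrsub dd hddY b hb y hy.1 hyb
        have hxL : x ∈ L i := Set.mem_sUnion.mpr ⟨dd, ⟨hddY, ⟨y, hy⟩, hsub⟩, hxdd⟩
        exact Set.mem_sUnion.mpr ⟨trX L E C n i, ⟨i, rfl⟩,
          Set.mem_union_left _ (by rw [if_pos hi]; exact hxL)⟩
      · have hdd : dd ∈ {dd ∈ Y | dd ∩ {x | x < ns} = ∅} :=
          ⟨hddY, Set.not_nonempty_iff_eq_empty.mp hdn⟩
        obtain ⟨j, hj⟩ := hEsurj dd hdd
        obtain ⟨i, hi⟩ := hCcov j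
        exact Set.mem_sUnion.mpr ⟨trX L E C n i, ⟨i, rfl⟩,
          Set.mem_union_right _ (Set.mem_biUnion hi (by rw [hj]; exact hxdd))⟩
  have hXinf : (bigX L E C n).Infinite := by
    have hinj : Function.Injective (trX L E C n) := by
      intro a b hab
      by_contra hne
      obtain ⟨x, hx⟩ := htrne a
      exact Set.disjoint_left.mp (htrXdisj a b hne) hx (hab ▸ hx)
    exact Set.infinite_range_of_injective hinj
  have hXinit : InitSeg s ns (bigX L E C n) := by
    intro b hb
    obtain ⟨i, hi, hbi⟩ := hbLsurj b hb
    refine ⟨trX L E C n i, ⟨i, rfl⟩, ?_⟩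
    rw [trX, Set.union_inter_distrib_right, if_pos hi]
    have h2 : (⋃ j ∈ C i, E j) ∩ {x | x < ns} = ∅ := by
      ext x
      simp only [Set.mem_inter_iff, Set.mem_iUnion, Set.mem_empty_iff_false, iff_false]
      rintro ⟨⟨j, hj, hxj⟩, hxns⟩
      have : x ∈ E j ∩ {x | x < ns} := ⟨hxj, hxns⟩
      rw [hEtr j] at this
      exact this
    rw [h2, Set.union_empty, hLtr i hi, hbi]
  have hXco : Coarser (bigX L E C n) Y := by
    rintro b ⟨i, rfl⟩
    refine ⟨(if i ≤ n then {dd ∈ Y | (dd ∩ {x | x < ns}).Nonempty ∧ dd ∩ {x | x < ns} ⊆ bL i}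
      else ∅) ∪ (E '' C i), ?_, ?_⟩
    · intro dd hdd
      rcases hdd with h | ⟨j, hj, rfl⟩
      · split_ifs at h with hc1
        · exact h.1
        · exact h.elim
      · exact hEY j
    · rw [Set.sUnion_union, Set.sUnion_image, trX]
      congr 1
      split_ifs with hc1
      · rfl
      · exact (Set.sUnion_empty).symm
  refine ⟨bigX L E C n, hXP, hXinf, hXinit, hXco, c, ?_⟩
  exact key s π Xb c hs hLs hLinj hLcov hLdisj hLE hEne hEdisj hEmono
    hCmem hCsurj hCne hCdisj hCmono hCcov hXbP.2.1 hmono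
end S18x

/-- relativized corollary to the Dual Ramsey Theorem (which is assumed as
the hypothesis `DRT`): for any finite coloring of the `(n+k+1)`-block segments and any
dual Ellentuck neighborhood `(s, Y)^ω` with `|s| = n + 1`, there is `X ∈ (s, Y)^ω` such
that the `(n+k+1)`-block segments `u` with `s ⊴ u` and `u* ⊑ X` are monochromatic. -/
theorem stmt18
    (DRT : ∀ (m r : ℕ) (π : Set (Set ℕ) → ℕ → Fin (r + 1)) (Z : Set (Set ℕ)),
      IsPartition Z → Z.Infinite →
      ∃ X, IsPartition X ∧ X.Infinite ∧ Coarser X Z ∧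
        ∃ c : Fin (r + 1), ∀ u nu, IsSegOf u nu → u.ncard = m + 1 →
          SegCoarser (segExt u nu) (nu + 1) X → π u nu = c)
    (r n k : ℕ) (π : Set (Set ℕ) → ℕ → Fin (r + 1))
    (s : Set (Set ℕ)) (ns : ℕ) (Y : Set (Set ℕ))
    (hs : IsSegOf s ns) (hcard : s.ncard = n + 1)
    (hY : IsPartition Y) (hYi : Y.Infinite) (hsY : SegCoarser s ns Y) :
    ∃ X, IsPartition X ∧ X.Infinite ∧ InitSeg s ns X ∧ Coarser X Y ∧
      ∃ c : Fin (r + 1), ∀ u nu, IsSegOf u nu → u.ncard = n + k + 1 →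
        InitSeg s ns u → SegCoarser (segExt u nu) (nu + 1) X → π u nu = c := by
  exact S18x.main18 DRT r n k π s ns Y hs hcard hY hYi hsY
end

section
/- If a family C of infinite partitions of ω has the segment-coloring-property, then for every Z ∈ C and every infinite partition Z', considering the coloring π of 2-block segments given by π(u) = 0 iff u is a segment of Z' (i.e., u* ⊑ Z' after suitable shift), there is X ∈ C coarser than Z such that either X ⊑ Z' or X ⊓ Z' = {ω}. -/
open Set

section Aux

/-- Every point lies in a block of a partition. -/
lemma exists_block {Y : Set (Set ℕ)} (hY : IsPartition Y) (x : ℕ) : ∃ d ∈ Y, x ∈ d := by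
  have hx : x ∈ ⋃₀ Y := by rw [hY.2.2]; trivial
  simpa [Set.mem_sUnion] using hx

/-- Blocks containing a common point coincide. -/
lemma block_unique {Y : Set (Set ℕ)} (hY : IsPartition Y) {d d' : Set ℕ}
    (hd : d ∈ Y) (hd' : d' ∈ Y) {x : ℕ} (hxd : x ∈ d) (hxd' : x ∈ d') : d = d' := by
  by_contra hne
  exact Set.disjoint_left.mp (hY.2.1 d hd d' hd' hne) hxd hxd'

/-- An infinite partition has arbitrarily large block-minima. -/
lemma exists_min_gt {X : Set (Set ℕ)} (hX : IsPartition X) (hXi : X.Infinite) (N : ℕ) :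
    ∃ nu, N < nu ∧ ∃ d ∈ X, nu ∈ d ∧ ∀ k ∈ d, nu ≤ k := by
  have himg : ((fun d : Set ℕ => sInf d) '' X).Infinite := by
    apply Set.Infinite.image ?_ hXi
    intro d hd d' hd' h
    have h1 : sInf d ∈ d := Nat.sInf_mem (hX.1 d hd)
    have h2 : sInf d' ∈ d' := Nat.sInf_mem (hX.1 d' hd')
    have h' : sInf d = sInf d' := h
    exact block_unique hX hd hd' (h' ▸ h1) h2
  obtain ⟨nu, hmem, hlt⟩ := himg.exists_gt N
  obtain ⟨d, hd, rfl⟩ := hmem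
  exact ⟨sInf d, hlt, d, hd, Nat.sInf_mem (hX.1 d hd), fun k hk => Nat.sInf_le hk⟩

/-- The two-block segment determined by a union of blocks `A` at a block-minimum cutoff `nu`
is compatible with `X` and extends the trivial segment `{{0}}`. -/
lemma key_compat {X : Set (Set ℕ)} (hX : IsPartition X) (A : Set ℕ)
    (hA : ∀ d ∈ X, (d ∩ A).Nonempty → d ⊆ A)
    (nu : ℕ) (d0 : Set ℕ) (hd0 : d0 ∈ X) (hnud0 : nu ∈ d0) (hmin : ∀ k ∈ d0, nu ≤ k)
    (a : ℕ) (haA : a ∈ A) (haLt : a < nu) (e : ℕ) (heA : e ∉ A) (heLt : e < nu) :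
    IsSegOf {A ∩ {k | k < nu}, Aᶜ ∩ {k | k < nu}} nu ∧
    ({A ∩ {k | k < nu}, Aᶜ ∩ {k | k < nu}} : Set (Set ℕ)).ncard = 2 ∧
    InitSeg {({0} : Set ℕ)} 1 {A ∩ {k | k < nu}, Aᶜ ∩ {k | k < nu}} ∧
    SegCoarser (segExt {A ∩ {k | k < nu}, Aᶜ ∩ {k | k < nu}} nu) (nu + 1) X := by
  set p : Set ℕ := A ∩ {k | k < nu} with hp
  set q : Set ℕ := Aᶜ ∩ {k | k < nu} with hq
  have hap : a ∈ p := ⟨haA, haLt⟩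
  have heq : e ∈ q := ⟨heA, heLt⟩
  have hpq : p ≠ q := fun h => (h ▸ hap).1 haA
  have hdisj : Disjoint p q := by
    rw [Set.disjoint_left]
    rintro x ⟨hxA, -⟩ ⟨hxA', -⟩
    exact hxA' hxA
  refine ⟨⟨?_, ?_, ?_⟩, Set.ncard_pair hpq, ?_, ?_⟩
  · rintro b (rfl | rfl)
    · exact ⟨a, hap⟩
    · exact ⟨e, heq⟩
  · rintro b (rfl | rfl) c (rfl | rfl) hbc
    · exact absurd rfl hbc
    · exact hdisj
    · exact hdisj.symm
    · exact absurd rfl hbc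
  · ext x
    simp only [Set.mem_sUnion, Set.mem_insert_iff, Set.mem_singleton_iff, Set.mem_setOf_eq]
    constructor
    · rintro ⟨t, (rfl | rfl), hx⟩
      · exact hx.2
      · exact hx.2
    · intro hx
      by_cases hxA : x ∈ A
      · exact ⟨p, Or.inl rfl, hxA, hx⟩
      · exact ⟨q, Or.inr rfl, hxA, hx⟩
  · -- InitSeg
    rintro b hb
    have hb' : b = {0} := hb
    subst hb'
    have h0nu : (0 : ℕ) < nu := Nat.lt_of_le_of_lt (Nat.zero_le a) haLt
    by_cases h0A : (0 : ℕ) ∈ A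
    · refine ⟨p, Or.inl rfl, ?_⟩
      ext x
      simp only [Set.mem_singleton_iff, Set.mem_inter_iff, Set.mem_setOf_eq]
      constructor
      · rintro rfl; exact ⟨⟨h0A, h0nu⟩, Nat.zero_lt_one⟩
      · rintro ⟨-, hx1⟩; omega
    · refine ⟨q, Or.inr rfl, ?_⟩
      ext x
      simp only [Set.mem_singleton_iff, Set.mem_inter_iff, Set.mem_setOf_eq]
      constructor
      · rintro rfl; exact ⟨⟨h0A, h0nu⟩, Nat.zero_lt_one⟩
      · rintro ⟨-, hx1⟩; omega
  · -- SegCoarser of segExt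
    rintro b hb
    rcases hb with rfl | rfl | rfl
    · -- the new block {nu}
      refine ⟨{d0}, by simpa using hd0, ?_⟩
      ext x
      simp only [Set.mem_singleton_iff, Set.sUnion_singleton, Set.mem_inter_iff,
        Set.mem_setOf_eq]
      constructor
      · rintro rfl; exact ⟨hnud0, Nat.lt_succ_self _⟩
      · rintro ⟨hxd0, hxlt⟩
        have := hmin x hxd0
        omega
    · -- block p
      refine ⟨{d | d ∈ X ∧ d ⊆ A ∧ d ≠ d0}, fun d hd => hd.1, ?_⟩
      ext x
      simp only [Set.mem_inter_iff, Set.mem_setOf_eq, Set.mem_sUnion]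
      constructor
      · rintro ⟨hxA, hxnu⟩
        obtain ⟨d, hd, hxd⟩ := exists_block hX x
        have hdA : d ⊆ A := hA d hd ⟨x, hxd, hxA⟩
        have hxnu' : x < nu := hxnu
        have hdne : d ≠ d0 := by
          rintro rfl
          have := hmin x hxd; omega
        exact ⟨⟨d, ⟨hd, hdA, hdne⟩, hxd⟩, Nat.lt_succ_of_lt hxnu'⟩
      · rintro ⟨⟨d, ⟨hd, hdA, hdne⟩, hxd⟩, hxlt⟩
        have hxlt' : x < nu + 1 := hxlt
        refine ⟨hdA hxd, ?_⟩
        rcases Nat.lt_or_ge x nu with h | h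
        · exact h
        · have hx : x = nu := by omega
          subst hx
          exact absurd (block_unique hX hd hd0 hxd hnud0) hdne
    · -- block q
      refine ⟨{d | d ∈ X ∧ d ∩ A = ∅ ∧ d ≠ d0}, fun d hd => hd.1, ?_⟩
      ext x
      simp only [Set.mem_inter_iff, Set.mem_compl_iff, Set.mem_setOf_eq, Set.mem_sUnion]
      constructor
      · rintro ⟨hxA, hxnu⟩
        obtain ⟨d, hd, hxd⟩ := exists_block hX x
        have hdA : d ∩ A = ∅ := by
          by_contra hne
          exact hxA (hA d hd (Set.nonempty_iff_ne_empty.mpr hne) hxd)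
        have hxnu' : x < nu := hxnu
        have hdne : d ≠ d0 := by
          rintro rfl
          have := hmin x hxd; omega
        exact ⟨⟨d, ⟨hd, hdA, hdne⟩, hxd⟩, Nat.lt_succ_of_lt hxnu'⟩
      · rintro ⟨⟨d, ⟨hd, hdA, hdne⟩, hxd⟩, hxlt⟩
        have hxlt' : x < nu + 1 := hxlt
        refine ⟨fun hxA => ?_, ?_⟩
        · have : x ∈ d ∩ A := ⟨hxd, hxA⟩
          rw [hdA] at this
          exact this
        · rcases Nat.lt_or_ge x nu with h | h
          · exact h
          · have hx : x = nu := by omega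
            subst hx
            exact absurd (block_unique hX hd hd0 hxd hnud0) hdne

end Aux

/-- a family of infinite partitions with the segment-coloring-property can
decide, below any of its members, between refinement of and total incompatibility with
any given infinite partition. -/
theorem stmt19 (C : Set (Set (Set ℕ))) (hC : ∀ X ∈ C, IsPartition X ∧ X.Infinite)
    (hSCP : SegColProp C) (Z : Set (Set ℕ)) (hZ : Z ∈ C)
    (Z' : Set (Set ℕ)) (hZ' : IsPartition Z') (hZ'i : Z'.Infinite) :
    ∃ X ∈ C, Coarser X Z ∧ (Coarser X Z' ∨ pMeet X Z' = OneBlock) := by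
  classical
  obtain ⟨X, hXC, hXZ, H⟩ :=
    hSCP 1 1 (fun u nu => if SegCoarser u nu Z' then 0 else 1) Z hZ
  obtain ⟨hXp, hXi⟩ := hC X hXC
  refine ⟨X, hXC, hXZ, ?_⟩
  -- the trivial one-block segment {{0}}
  have hs0seg : IsSegOf {({0} : Set ℕ)} 1 := by
    refine ⟨?_, ?_, ?_⟩
    · rintro b hb
      have hb' : b = {0} := hb
      subst hb'
      exact ⟨0, rfl⟩
    · rintro b hb c hc hbc
      have hb' : b = {0} := hb
      have hc' : c = {0} := hc
      exact absurd (hb'.trans hc'.symm) hbc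
    · ext x
      simp only [Set.sUnion_singleton, Set.mem_singleton_iff, Set.mem_setOf_eq]
      omega
  have hs0card : ({({0} : Set ℕ)} : Set (Set ℕ)).ncard = 0 + 1 := by
    simp
  have hs0init : InitSeg {({0} : Set ℕ)} 1 X := by
    rintro b hb
    have hb' : b = {0} := hb
    subst hb'
    obtain ⟨d, hd, h0d⟩ := exists_block hXp 0
    refine ⟨d, hd, ?_⟩
    ext x
    simp only [Set.mem_singleton_iff, Set.mem_inter_iff, Set.mem_setOf_eq]
    constructor
    · rintro rfl; exact ⟨h0d, Nat.zero_lt_one⟩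
    · rintro ⟨-, hx⟩; omega
  obtain ⟨c, hc⟩ := H 0 {({0} : Set ℕ)} 1 hs0seg hs0card hs0init
  have hc01 : c = 0 ∨ c = 1 := by
    rcases c with ⟨cv, hcv⟩
    interval_cases cv
    · exact Or.inl rfl
    · exact Or.inr rfl
  rcases hc01 with hc0 | hc1
  · -- Case c = 0 : X is coarser than Z'
    left
    intro β hβ
    refine ⟨{z | z ∈ Z' ∧ (z ∩ β).Nonempty}, fun z hz => hz.1, ?_⟩
    apply Set.Subset.antisymm
    · intro x hx
      obtain ⟨z, hz, hxz⟩ := exists_block hZ' x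
      exact ⟨z, ⟨hz, ⟨x, hxz, hx⟩⟩, hxz⟩
    · rintro x ⟨z, ⟨hz, w, hwz, hwβ⟩, hxz⟩
      -- find an element outside β
      obtain ⟨β', hβ', hβ'ne⟩ : ∃ β' ∈ X, β' ≠ β := by
        by_contra hcon
        push_neg at hcon
        exact hXi (Set.Finite.subset (Set.finite_singleton β) (fun y hy => hcon y hy))
      obtain ⟨e, he⟩ := hXp.1 β' hβ'
      have heβ : e ∉ β := fun h => hβ'ne (block_unique hXp hβ' hβ he h)
      obtain ⟨nu, hnuGt, d0, hd0, hnud0, hminnu⟩ :=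
        exists_min_gt hXp hXi (max (max x w) e)
      have hA : ∀ d ∈ X, (d ∩ β).Nonempty → d ⊆ β := by
        rintro d hd ⟨y, hyd, hyβ⟩
        rw [block_unique hXp hd hβ hyd hyβ]
      have hwlt : w < nu := by omega
      have hxlt : x < nu := by omega
      have helt : e < nu := by omega
      obtain ⟨hseg, hcard, hinit, hcompat⟩ :=
        key_compat hXp β hA nu d0 hd0 hnud0 hminnu w hwβ hwlt e heβ helt
      have hval : (if SegCoarser {β ∩ {k | k < nu}, βᶜ ∩ {k | k < nu}} nu Z'
          then (0 : Fin 2) else 1) = c :=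
        hc _ nu hseg hcard hinit hcompat
      rw [hc0] at hval
      have hSC : SegCoarser {β ∩ {k | k < nu}, βᶜ ∩ {k | k < nu}} nu Z' := by
        by_contra hS
        rw [if_neg hS] at hval
        exact absurd hval (by decide)
      obtain ⟨S', hS'Z, hEq⟩ := hSC (β ∩ {k | k < nu}) (Set.mem_insert _ _)
      have hw' : w ∈ ⋃₀ S' ∩ {k | k < nu} := by
        rw [← hEq]; exact ⟨hwβ, hwlt⟩
      obtain ⟨z'', hz''S, hwz''⟩ := hw'.1
      have hzz : z'' = z := block_unique hZ' (hS'Z hz''S) hz hwz'' hwz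
      have hx' : x ∈ ⋃₀ S' ∩ {k | k < nu} := ⟨⟨z'', hz''S, hzz ▸ hxz⟩, hxlt⟩
      rw [← hEq] at hx'
      exact hx'.1
  · -- Case c = 1 : pMeet X Z' = OneBlock
    right
    set R : ℕ → ℕ → Prop := fun a c => SameBlock X a c ∨ SameBlock Z' a c with hRdef
    have hE0 : ∀ m, Relation.EqvGen R 0 m := by
      by_contra hcon
      push_neg at hcon
      obtain ⟨m, hm⟩ := hcon
      set A : Set ℕ := {a | Relation.EqvGen R 0 a} with hAdef
      have h0A : (0 : ℕ) ∈ A := Relation.EqvGen.refl 0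
      have hmA : m ∉ A := hm
      have hAX : ∀ d ∈ X, (d ∩ A).Nonempty → d ⊆ A := by
        rintro d hd ⟨y, hyd, hyA⟩ x hxd
        exact Relation.EqvGen.trans _ _ _ hyA
          (Relation.EqvGen.rel _ _ (Or.inl ⟨d, hd, hyd, hxd⟩))
      have hAZ : ∀ z ∈ Z', (z ∩ A).Nonempty → z ⊆ A := by
        rintro z hz ⟨y, hyz, hyA⟩ x hxz
        exact Relation.EqvGen.trans _ _ _ hyA
          (Relation.EqvGen.rel _ _ (Or.inr ⟨z, hz, hyz, hxz⟩))
      obtain ⟨nu, hnuGt, d0, hd0, hnud0, hminnu⟩ := exists_min_gt hXp hXi m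
      have h0lt : (0 : ℕ) < nu := by omega
      obtain ⟨hseg, hcard, hinit, hcompat⟩ :=
        key_compat hXp A hAX nu d0 hd0 hnud0 hminnu 0 h0A h0lt m hmA hnuGt
      have hval : (if SegCoarser {A ∩ {k | k < nu}, Aᶜ ∩ {k | k < nu}} nu Z'
          then (0 : Fin 2) else 1) = c :=
        hc _ nu hseg hcard hinit hcompat
      rw [hc1] at hval
      have hSC : SegCoarser {A ∩ {k | k < nu}, Aᶜ ∩ {k | k < nu}} nu Z' := by
        rintro b hb
        rcases hb with rfl | rfl
        · refine ⟨{z | z ∈ Z' ∧ z ⊆ A}, fun z hz => hz.1, ?_⟩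
          ext x
          simp only [Set.mem_inter_iff, Set.mem_setOf_eq, Set.mem_sUnion]
          constructor
          · rintro ⟨hxA, hxnu⟩
            obtain ⟨z, hz, hxz⟩ := exists_block hZ' x
            exact ⟨⟨z, ⟨hz, hAZ z hz ⟨x, hxz, hxA⟩⟩, hxz⟩, hxnu⟩
          · rintro ⟨⟨z, ⟨hz, hzA⟩, hxz⟩, hxnu⟩
            exact ⟨hzA hxz, hxnu⟩
        · refine ⟨{z | z ∈ Z' ∧ z ∩ A = ∅}, fun z hz => hz.1, ?_⟩
          ext x
          simp only [Set.mem_inter_iff, Set.mem_compl_iff, Set.mem_setOf_eq, Set.mem_sUnion]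
          constructor
          · rintro ⟨hxA, hxnu⟩
            obtain ⟨z, hz, hxz⟩ := exists_block hZ' x
            have hzA : z ∩ A = ∅ := by
              by_contra hne
              exact hxA (hAZ z hz (Set.nonempty_iff_ne_empty.mpr hne) hxz)
            exact ⟨⟨z, ⟨hz, hzA⟩, hxz⟩, hxnu⟩
          · rintro ⟨⟨z, ⟨hz, hzA⟩, hxz⟩, hxnu⟩
            refine ⟨fun hxA => ?_, hxnu⟩
            have : x ∈ z ∩ A := ⟨hxz, hxA⟩
            rw [hzA] at this
            exact this
      rw [if_pos hSC] at hval
      exact absurd hval (by decide)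
    have hEall : ∀ n m, Relation.EqvGen R n m := fun n m =>
      Relation.EqvGen.trans _ _ _ (Relation.EqvGen.symm _ _ (hE0 n)) (hE0 m)
    show pMeet X Z' = OneBlock
    ext b
    simp only [pMeet, OneBlock, Set.mem_setOf_eq, Set.mem_singleton_iff]
    constructor
    · rintro ⟨n, rfl⟩
      ext m
      simpa using hEall n m
    · rintro rfl
      refine ⟨0, ?_⟩
      ext m
      simpa using hEall 0 m
end
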